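/- arXiv:0710.4032 — 10 statements merged into one kernel-verified Lean document; each statement's English description precedes it below -/
import Mathlib

section
/- For every natural number n and every rational number x, the n-th Bernoulli polynomial satisfies B_n(x) = ∑_{k=0}^{n} (1/(k+1)) ∑_{j=0}^{k} (-1)^j C(k,j) (x+j)^n. -/
/-!
The operator identity `D = log (1 + Δ)` on polynomials: differentiating Newton's
forward-difference expansion `P (x + t) = ∑ₖ Δᵏ P (x) · C(t, k)` at `t = 0`, where
`d/dt C(t, k) = (-1)^(k-1) / k`, gives `P' = ∑_{k ≥ 1} (-1)^(k-1) Δᵏ P / k`. For `P = B_{n+1}`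
we have `Δ B_{n+1} = (n+1) yⁿ` and `B_{n+1}' = (n+1) B_n`, while the inner sum of the formula
is `(-1)ᵏ Δᵏ yⁿ` at `x`.
-/

open Finset Polynomial Nat fwdDiff

theorem derivative_descPochhammer_succ_eval_zero {R : Type*} [CommRing R] (n : ℕ) :
    (derivative (descPochhammer R (n + 1))).eval 0 = (-1) ^ n * n ! := by
  have h := ascPochhammer_eval_neg_eq_descPochhammer R (-1) n
  rw [neg_neg, ascPochhammer_eval_one] at h
  rw [descPochhammer_succ_left, derivative_mul, derivative_X, eval_add, eval_mul, eval_mul,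
    eval_X, eval_one, eval_comp, one_mul, zero_mul, add_zero, eval_sub, eval_X, eval_one,
    zero_sub, h, ← mul_assoc, ← pow_add, ← two_mul, pow_mul, neg_one_sq, one_pow, one_mul]

theorem sum_neg_one_pow_mul_choose_mul_eq_fwdDiff_iter {R : Type*} [CommRing R] (f : R → R)
    (k : ℕ) (x : R) :
    ∑ j ∈ range (k + 1), (-1 : R) ^ j * (k.choose j : R) * f (x + j) =
      (-1) ^ k * Δ_[1] ^[k] f x := by
  rw [fwdDiff_iter_eq_sum_shift, mul_sum]
  refine sum_congr rfl fun j hj => ?_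
  have hjk : j ≤ k := Nat.lt_succ_iff.mp (mem_range.mp hj)
  rw [zsmul_eq_mul, nsmul_one]
  push_cast
  rw [← mul_assoc, ← mul_assoc, ← pow_add, show k + (k - j) = j + 2 * (k - j) by omega, pow_add,
    pow_mul, neg_one_sq, one_pow, mul_one]

theorem Polynomial.eval_add_natCast_eq_sum_fwdDiff_iter {R : Type*} [CommRing R] {P : R[X]}
    {N : ℕ} (hP : P.natDegree < N) (x : R) (m : ℕ) :
    P.eval (x + m) = ∑ k ∈ range N, (m.choose k : R) * Δ_[1] ^[k] P.eval x := by
  have newton := shift_eq_sum_fwdDiff_iter (1 : R) P.eval m x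
  simp only [nsmul_eq_mul, mul_one] at newton
  calc P.eval (x + m) = ∑ k ∈ range (m + 1 + N), (m.choose k : R) * Δ_[1] ^[k] P.eval x := by
        rw [newton]
        refine sum_subset (range_subset_range.mpr (Nat.le_add_right _ _)) fun k _ hk => ?_
        rw [Nat.choose_eq_zero_of_lt (by simpa using hk), Nat.cast_zero, zero_mul]
    _ = ∑ k ∈ range N, (m.choose k : R) * Δ_[1] ^[k] P.eval x := by
        refine (sum_subset (range_subset_range.mpr (Nat.le_add_left _ _)) fun k _ hk => ?_).symm
        rw [fwdDiff_iter_eq_zero_of_degree_lt (hP.trans_le (by simpa using hk)), Pi.zero_apply,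
          mul_zero]

section

variable {K : Type*} [Field K] [CharZero K]

theorem Polynomial.comp_X_add_C_eq_sum_fwdDiff_iter {P : K[X]} {N : ℕ} (hP : P.natDegree < N)
    (x : K) :
    P.comp (X + C x) = ∑ k ∈ range N, C (Δ_[1] ^[k] P.eval x / k !) * descPochhammer K k := by
  refine eq_of_infinite_eval_eq _ _ ((Set.infinite_range_of_injective Nat.cast_injective).mono ?_)
  rintro _ ⟨m, rfl⟩
  simp only [Set.mem_ofPred_eq, eval_comp, eval_add, eval_X, eval_C, eval_finsetSum, eval_mul]
  rw [add_comm, eval_add_natCast_eq_sum_fwdDiff_iter hP]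
  refine sum_congr rfl fun k _ => ?_
  rw [Nat.cast_choose_eq_descPochhammer_div]
  ring

theorem Polynomial.derivative_eval_eq_sum_fwdDiff_iter {P : K[X]} {N : ℕ} (hP : P.natDegree ≤ N)
    (x : K) :
    P.derivative.eval x = ∑ k ∈ range N, (-1) ^ k / (k + 1) * Δ_[1] ^[k + 1] P.eval x := by
  have h := congrArg (fun Q => (derivative Q).eval 0)
    (comp_X_add_C_eq_sum_fwdDiff_iter (Nat.lt_succ_of_le hP) x)
  simp only [derivative_comp, derivative_add, derivative_X, derivative_C, add_zero, one_mul,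
    eval_comp, eval_add, eval_X, eval_C, zero_add, derivative_sum, derivative_C_mul, eval_finsetSum,
    eval_mul] at h
  rw [h, sum_range_succ', descPochhammer_zero, derivative_one, eval_zero, mul_zero, add_zero]
  refine sum_congr rfl fun k _ => ?_
  rw [derivative_descPochhammer_succ_eval_zero, Nat.factorial_succ]
  have : (k ! : K) ≠ 0 := Nat.cast_ne_zero.mpr k.factorial_ne_zero
  push_cast
  field_simp

end

theorem Polynomial.natDegree_bernoulli_le (n : ℕ) : (bernoulli n).natDegree ≤ n :=
  natDegree_le_iff_coeff_eq_zero.mpr fun i hi => by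
    rw [coeff_bernoulli, if_neg (not_le.mpr (by exact_mod_cast hi))]

theorem Polynomial.fwdDiff_bernoulli_succ_eval (n : ℕ) :
    Δ_[1] (bernoulli (n + 1)).eval = fun x => ((n : ℚ) + 1) * x ^ n := by
  ext x
  rw [fwdDiff, add_comm x, bernoulli_eval_one_add]
  push_cast
  ring

/-- For every natural number `n` and every rational `x`, the `n`-th Bernoulli polynomial
satisfies `B_n(x) = ∑_{k=0}^{n} (1/(k+1)) ∑_{j=0}^{k} (-1)^j C(k,j) (x+j)^n`. -/
theorem bernoulli_poly_eval_eq_double_sum (n : ℕ) (x : ℚ) :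
    (Polynomial.bernoulli n).eval x =
      ∑ k ∈ Finset.range (n + 1), (1 / ((k : ℚ) + 1)) *
        ∑ j ∈ Finset.range (k + 1), (-1 : ℚ) ^ j * (k.choose j : ℚ) * (x + (j : ℚ)) ^ n := by
  have hn : ((n : ℚ) + 1) ≠ 0 := n.cast_add_one_ne_zero
  have pow_eq_fwdDiff :
      (fun y : ℚ => y ^ n) = ((n : ℚ) + 1)⁻¹ • Δ_[1] (Polynomial.bernoulli (n + 1)).eval := by
    ext y
    rw [fwdDiff_bernoulli_succ_eval, Pi.smul_apply, smul_eq_mul, inv_mul_cancel_left₀ hn]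
  have bernoulli_eq_derivative : (Polynomial.bernoulli n).eval x =
      ((n : ℚ) + 1)⁻¹ * (derivative (Polynomial.bernoulli (n + 1))).eval x := by
    simp [derivative_bernoulli_add_one, hn]
  rw [bernoulli_eq_derivative,
    derivative_eval_eq_sum_fwdDiff_iter (natDegree_bernoulli_le (n + 1)), mul_sum]
  refine sum_congr rfl fun k _ => ?_
  rw [sum_neg_one_pow_mul_choose_mul_eq_fwdDiff_iter (· ^ n), pow_eq_fwdDiff,
    fwdDiff_iter_const_smul, Pi.smul_apply, smul_eq_mul, Function.iterate_succ_apply]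
  ring
end

section
/- For every positive integer n, ∫_0^1 x^{n-1}/(1+x^n) · log(log(1/x)) dx = − (log 2 · log(2n²))/(2n). -/
/-!
The substitution `x = exp (-t)` followed by `t ↦ t / n` turns the integral into
`(I - log n * log 2) / n` with `I = ∫₀^∞ log t / (eᵗ + 1) dt`.

To evaluate `I`, write `1 / (eᵗ + 1) = 1 / (eᵗ - 1) - 2 / (e²ᵗ - 1)`. After rescaling the second
term, the integrals of `log t / (eᵗ - 1)` over `(ε, ∞)` and `(2ε, ∞)` telescope, so that
`∫_ε^∞ log t / (eᵗ + 1) dt = ∫_ε^{2ε} log t / (eᵗ - 1) dt - log 2 * log (1 - e^{-2ε})`.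
On `[ε, 2ε]` the kernel `1 / (eᵗ - 1)` may be replaced by `1 / t` at a cost `O(ε log (1/ε))`, and
`∫_ε^{2ε} log t / t dt = log 2 * log ε + (log 2)² / 2`; letting `ε → 0` gives
`I = (log 2)² / 2 - (log 2)² = -(log 2)² / 2`.
-/

open Real MeasureTheory Set Filter Topology

lemma integrableOn_log_mul_exp_neg : IntegrableOn (fun t => log t * exp (-t)) (Ioi 0) := by
  have hsmall : IntegrableOn (fun t => log t * exp (-t)) (Ioc 0 1) :=
    (intervalIntegrable_iff_integrableOn_Ioc_of_le zero_le_one).1 <|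
      intervalIntegral.intervalIntegrable_log'.mul_continuousOn (by fun_prop)
  have hlarge : IntegrableOn (fun t => log t * exp (-t)) (Ioi 1) := by
    refine integrable_of_isBigO_exp_neg one_half_pos
      (continuousOn_log.mono (fun t ht => (zero_lt_one.trans_le ht).ne') |>.mul (by fun_prop)) ?_
    have hlog : log =O[atTop] fun t => exp (1 / 2 * t) :=
      (isLittleO_log_id_atTop.trans
        ((isLittleO_pow_exp_pos_mul_atTop 1 one_half_pos).congr_left fun t => pow_one t)).isBigO
    refine (hlog.mul (Asymptotics.isBigO_refl (fun t => exp (-t)) atTop)).congr_right fun t => ?_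
    rw [← exp_add]
    ring_nf
  simpa [Ioc_union_Ioi_eq_Ioi zero_le_one] using hsmall.union hlarge

lemma integrableOn_log_mul_of_abs_le_exp_neg {g : ℝ → ℝ} {a C : ℝ} (ha : 0 ≤ a)
    (hg : ContinuousOn g (Ioi a)) (hle : ∀ t ∈ Ioi a, |g t| ≤ C * exp (-t)) :
    IntegrableOn (fun t => log t * g t) (Ioi a) := by
  refine ((integrableOn_log_mul_exp_neg.mono_set (Ioi_subset_Ioi ha)).const_mul C).mono
    (((continuousOn_log.mono fun t ht => (ha.trans_lt ht).ne').mul hg).aestronglyMeasurable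
      measurableSet_Ioi) ((ae_restrict_iff' measurableSet_Ioi).2 (.of_forall fun t ht => ?_))
  have hC : 0 ≤ C := nonneg_of_mul_nonneg_left ((abs_nonneg _).trans (hle t ht)) (exp_pos _)
  simp only [norm_mul, norm_eq_abs, abs_of_nonneg hC, abs_of_pos (exp_pos _)]
  calc |log t| * |g t| ≤ |log t| * (C * exp (-t)) := by gcongr; exact hle t ht
    _ = C * (|log t| * exp (-t)) := by ring

lemma inv_exp_sub_one_le {a t : ℝ} (ha : 0 < a) (hat : a ≤ t) :
    (exp t - 1)⁻¹ ≤ (1 - exp (-a))⁻¹ * exp (-t) := by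
  have hpos : 0 < 1 - exp (-a) := sub_pos.2 (exp_lt_one_iff.2 (neg_lt_zero.2 ha))
  have hle : 1 ≤ exp (-a) * exp t := by rw [← exp_add]; exact one_le_exp (by linarith)
  rw [exp_neg t, ← mul_inv]
  exact inv_anti₀ (by positivity) (by nlinarith)

lemma abs_inv_exp_sub_one_sub_inv_le {t : ℝ} (ht : 0 < t) : |(exp t - 1)⁻¹ - t⁻¹| ≤ 1 := by
  have hE : 0 < exp t - 1 := sub_pos.2 (one_lt_exp_iff.2 ht)
  have hlower : t ≤ exp t - 1 := by linarith [add_one_le_exp t]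
  have hupper : exp t - 1 ≤ t * exp t := by
    have h := add_one_le_exp (-t)
    have hinv : exp (-t) * exp t = 1 := by rw [← exp_add]; simp
    nlinarith [exp_pos t]
  rw [abs_sub_comm, abs_of_nonneg (sub_nonneg.2 (inv_anti₀ ht hlower)),
    inv_sub_inv ht.ne' hE.ne', div_le_one (by positivity)]
  linarith

lemma inv_exp_add_one_eq {t : ℝ} (ht : t ≠ 0) :
    (exp t + 1)⁻¹ = (exp t - 1)⁻¹ - 2 * (exp (2 * t) - 1)⁻¹ := by
  have h1 : exp t - 1 ≠ 0 := by simp [sub_eq_zero, ht]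
  have h2 : exp t + 1 ≠ 0 := by positivity
  rw [show exp (2 * t) - 1 = (exp t - 1) * (exp t + 1) by rw [two_mul, exp_add]; ring]
  field_simp
  ring

lemma tendsto_log_one_add_mul_exp_neg_atTop (c : ℝ) :
    Tendsto (fun t => log (1 + c * exp (-t))) atTop (𝓝 0) := by
  have h : Tendsto (fun t => 1 + c * exp (-t)) atTop (𝓝 1) := by
    simpa using (tendsto_exp_neg_atTop_nhds_zero.const_mul c).const_add 1
  simpa using h.log one_ne_zero

lemma hasDerivAt_log_one_sub_exp_neg {t : ℝ} (ht : 0 < t) :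
    HasDerivAt (fun t => log (1 - exp (-t))) (exp t - 1)⁻¹ t := by
  have hpos : 0 < 1 - exp (-t) := sub_pos.2 (exp_lt_one_iff.2 (neg_lt_zero.2 ht))
  refine (((hasDerivAt_neg t).exp.const_sub 1).log hpos.ne').congr_deriv ?_
  rw [exp_neg]
  field_simp [(sub_pos.2 (one_lt_exp_iff.2 ht)).ne']

lemma hasDerivAt_neg_log_one_add_exp_neg (t : ℝ) :
    HasDerivAt (fun t => -log (1 + exp (-t))) (exp t + 1)⁻¹ t := by
  refine (((hasDerivAt_neg t).exp.const_add 1).log (by positivity)).fun_neg.congr_deriv ?_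
  rw [exp_neg]
  field_simp

lemma integrableOn_Ioi_inv_exp_sub_one {a : ℝ} (ha : 0 < a) :
    IntegrableOn (fun t => (exp t - 1)⁻¹) (Ioi a) :=
  integrableOn_Ioi_deriv_of_nonneg' (fun t ht => hasDerivAt_log_one_sub_exp_neg (ha.trans_le ht))
    (fun t ht => (inv_pos.2 (sub_pos.2 (one_lt_exp_iff.2 (ha.trans ht)))).le)
    (by simpa [sub_eq_add_neg] using tendsto_log_one_add_mul_exp_neg_atTop (-1))

lemma integral_Ioi_inv_exp_sub_one {a : ℝ} (ha : 0 < a) :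
    ∫ t in Ioi a, (exp t - 1)⁻¹ = -log (1 - exp (-a)) := by
  rw [integral_Ioi_of_hasDerivAt_of_nonneg'
    (fun t ht => hasDerivAt_log_one_sub_exp_neg (ha.trans_le ht))
    (fun t ht => (inv_pos.2 (sub_pos.2 (one_lt_exp_iff.2 (ha.trans ht)))).le)
    (by simpa [sub_eq_add_neg] using tendsto_log_one_add_mul_exp_neg_atTop (-1)), zero_sub]

lemma integrableOn_Ioi_inv_exp_add_one (a : ℝ) :
    IntegrableOn (fun t => (exp t + 1)⁻¹) (Ioi a) :=
  integrableOn_Ioi_deriv_of_nonneg' (fun t _ => hasDerivAt_neg_log_one_add_exp_neg t)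
    (fun t _ => by positivity) (by simpa using (tendsto_log_one_add_mul_exp_neg_atTop 1).neg)

lemma integral_Ioi_inv_exp_add_one (a : ℝ) :
    ∫ t in Ioi a, (exp t + 1)⁻¹ = log (1 + exp (-a)) := by
  rw [integral_Ioi_of_hasDerivAt_of_nonneg' (fun t _ => hasDerivAt_neg_log_one_add_exp_neg t)
    (fun t _ => by positivity) (by simpa using (tendsto_log_one_add_mul_exp_neg_atTop 1).neg),
    zero_sub, neg_neg]

lemma integrableOn_log_mul_inv_exp_mul_sub_one {a c : ℝ} (ha : 0 < a) (hc : 1 ≤ c) :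
    IntegrableOn (fun t => log t * (exp (c * t) - 1)⁻¹) (Ioi a) := by
  refine integrableOn_log_mul_of_abs_le_exp_neg (C := (1 - exp (-a))⁻¹) ha.le
    (ContinuousOn.inv₀ (by fun_prop) fun t ht =>
      (sub_pos.2 (one_lt_exp_iff.2 (by nlinarith [mem_Ioi.1 ht]))).ne') fun t ht => ?_
  have hat : a ≤ t := (mem_Ioi.1 ht).le
  have hct : t ≤ c * t := le_mul_of_one_le_left (ha.trans ht).le hc
  have hE : 0 < exp t - 1 := sub_pos.2 (one_lt_exp_iff.2 (ha.trans ht))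
  rw [abs_of_pos (inv_pos.2 (hE.trans_le (by gcongr)))]
  calc (exp (c * t) - 1)⁻¹ ≤ (exp t - 1)⁻¹ := inv_anti₀ hE (by gcongr)
    _ ≤ (1 - exp (-a))⁻¹ * exp (-t) := inv_exp_sub_one_le ha hat

lemma integrableOn_log_mul_inv_exp_add_one :
    IntegrableOn (fun t => log t * (exp t + 1)⁻¹) (Ioi 0) :=
  integrableOn_log_mul_of_abs_le_exp_neg le_rfl (by fun_prop (disch := intros; positivity))
    fun t _ => by
      rw [one_mul, abs_of_pos (by positivity), exp_neg]
      exact inv_anti₀ (exp_pos t) (by linarith)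

lemma integral_Ioi_log_mul_inv_exp_add_one_of_pos {ε : ℝ} (hε : 0 < ε) :
    ∫ t in Ioi ε, log t * (exp t + 1)⁻¹ =
      (∫ t in ε..2 * ε, log t * (exp t - 1)⁻¹) - log 2 * log (1 - exp (-(2 * ε))) := by
  have h2ε : 0 < 2 * ε := by positivity
  have hp : ∀ {a : ℝ}, 0 < a → IntegrableOn (fun t => log t * (exp t - 1)⁻¹) (Ioi a) := fun ha => by
    simpa using integrableOn_log_mul_inv_exp_mul_sub_one ha le_rfl
  have hsplit : ∫ t in Ioi ε, log t * (exp t + 1)⁻¹ =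
      (∫ t in Ioi ε, log t * (exp t - 1)⁻¹) - 2 * ∫ t in Ioi ε, log t * (exp (2 * t) - 1)⁻¹ := by
    rw [← integral_const_mul, ← integral_sub (hp hε)
      ((integrableOn_log_mul_inv_exp_mul_sub_one hε one_le_two).const_mul 2)]
    refine setIntegral_congr_fun measurableSet_Ioi fun t ht => ?_
    rw [inv_exp_add_one_eq (hε.trans ht).ne']
    ring
  have hdilate : 2 * ∫ t in Ioi ε, log t * (exp (2 * t) - 1)⁻¹ =
      (∫ s in Ioi (2 * ε), log s * (exp s - 1)⁻¹) - log 2 * ∫ s in Ioi (2 * ε), (exp s - 1)⁻¹ := by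
    have h := integral_comp_mul_left_Ioi (fun s => log (s / 2) * (exp s - 1)⁻¹) ε two_pos
    simp only [mul_div_cancel_left₀ _ (two_ne_zero' ℝ), smul_eq_mul] at h
    rw [h, ← mul_assoc, mul_inv_cancel₀ two_ne_zero, one_mul, ← integral_const_mul,
      ← integral_sub (hp h2ε) ((integrableOn_Ioi_inv_exp_sub_one h2ε).const_mul _)]
    refine setIntegral_congr_fun measurableSet_Ioi fun s hs => ?_
    rw [log_div (h2ε.trans hs).ne' two_ne_zero]
    ring
  rw [hsplit, hdilate, integral_Ioi_inv_exp_sub_one h2ε,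
    ← intervalIntegral.integral_Ioi_sub_Ioi (hp hε) (by linarith)]
  ring

lemma integral_log_mul_inv {a b : ℝ} (ha : 0 < a) (hb : 0 < b) :
    ∫ t in a..b, log t * t⁻¹ = (log b ^ 2 - log a ^ 2) / 2 := by
  have hpos : ∀ t ∈ uIcc a b, t ≠ 0 := fun t ht => ((lt_min ha hb).trans_le ht.1).ne'
  have hderiv : ∀ t ∈ uIcc a b, HasDerivAt (fun t => log t ^ 2 / 2) (log t * t⁻¹) t := by
    intro t ht
    refine (((hasDerivAt_log (hpos t ht)).pow 2).div_const 2).congr_deriv ?_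
    norm_num
    ring
  rw [intervalIntegral.integral_eq_sub_of_hasDerivAt hderiv
    ((continuousOn_log.mono hpos).mul (continuousOn_inv₀.mono hpos)).intervalIntegrable]
  ring

lemma tendsto_integral_log_mul_inv_exp_sub_one_sub_inv :
    Tendsto (fun ε => ∫ t in ε..2 * ε, log t * ((exp t - 1)⁻¹ - t⁻¹)) (𝓝[>] 0) (𝓝 0) := by
  have hbound : Tendsto (fun ε => -log ε * ε) (𝓝[>] 0) (𝓝 0) := by
    simpa [mul_comm] using (continuous_mul_log.tendsto 0).neg.mono_left nhdsWithin_le_nhds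
  refine squeeze_zero_norm' ?_ hbound
  filter_upwards [Ioo_mem_nhdsGT one_half_pos] with ε ⟨hε, hε2⟩
  have hnorm : ∀ t ∈ uIoc ε (2 * ε), ‖log t * ((exp t - 1)⁻¹ - t⁻¹)‖ ≤ -log ε := by
    intro t ht
    rw [uIoc_of_le (by linarith)] at ht
    obtain ⟨hεt, ht2ε⟩ := ht
    have ht : 0 < t := hε.trans hεt
    have hlog : log t ≤ 0 := log_nonpos ht.le (by linarith)
    calc ‖log t * ((exp t - 1)⁻¹ - t⁻¹)‖ = -log t * |(exp t - 1)⁻¹ - t⁻¹| := by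
          rw [norm_mul, norm_eq_abs, norm_eq_abs, abs_of_nonpos hlog]
      _ ≤ -log t * 1 := by
          gcongr
          · linarith
          · exact abs_inv_exp_sub_one_sub_inv_le ht
      _ ≤ -log ε := by linarith [log_le_log hε hεt.le]
  simpa [abs_of_pos hε, two_mul] using intervalIntegral.norm_integral_le_of_norm_le_const hnorm

lemma tendsto_one_sub_exp_neg_mul_div (c : ℝ) :
    Tendsto (fun ε => (1 - exp (-(c * ε))) / ε) (𝓝[>] 0) (𝓝 c) := by
  have hderiv : HasDerivAt (fun ε => 1 - exp (-(c * ε))) c 0 := by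
    refine (((hasDerivAt_id 0).const_mul c).neg.exp.const_sub 1).congr_deriv ?_
    simp
  refine hderiv.tendsto_slope_zero_right.congr fun ε => ?_
  simp [div_eq_inv_mul]

theorem integral_Ioi_log_mul_inv_exp_add_one :
    ∫ t in Ioi 0, log t * (exp t + 1)⁻¹ = -log 2 ^ 2 / 2 := by
  set R := fun ε => ∫ t in ε..2 * ε, log t * ((exp t - 1)⁻¹ - t⁻¹)
  set F := fun ε => (∫ t in (0)..ε, log t * (exp t + 1)⁻¹) + R ε + log 2 ^ 2 / 2 -
    log 2 * log ((1 - exp (-(2 * ε))) / ε)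
  have hF : ∀ ε ∈ Ioi 0, ∫ t in Ioi 0, log t * (exp t + 1)⁻¹ = F ε := by
    intro ε (hε : 0 < ε)
    have hpos : ∀ t ∈ uIcc ε (2 * ε), t ≠ 0 := fun t ht =>
      ((lt_min hε (by positivity)).trans_le ht.1).ne'
    have hR : R ε = (∫ t in ε..2 * ε, log t * (exp t - 1)⁻¹) - ∫ t in ε..2 * ε, log t * t⁻¹ := by
      simp only [R, mul_sub]
      refine intervalIntegral.integral_sub ?_ ?_ <;> refine ContinuousOn.intervalIntegrable ?_
      · exact (continuousOn_log.mono hpos).mul (ContinuousOn.inv₀ (by fun_prop) fun t ht =>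
          sub_ne_zero.2 (by simpa using hpos t ht))
      · exact (continuousOn_log.mono hpos).mul (continuousOn_inv₀.mono hpos)
    have h1 : 0 < 1 - exp (-(2 * ε)) := sub_pos.2 (exp_lt_one_iff.2 (by linarith))
    rw [← intervalIntegral.integral_interval_add_Ioi integrableOn_log_mul_inv_exp_add_one
      (integrableOn_log_mul_inv_exp_add_one.mono_set (Ioi_subset_Ioi hε.le)),
      integral_Ioi_log_mul_inv_exp_add_one_of_pos hε]
    simp only [F, hR, integral_log_mul_inv hε (by positivity : 0 < 2 * ε),
      log_mul two_ne_zero hε.ne', log_div h1.ne' hε.ne']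
    ring
  have hF_lim : Tendsto F (𝓝[>] 0) (𝓝 (0 + 0 + log 2 ^ 2 / 2 - log 2 * log 2)) := by
    have hprim : Tendsto (fun ε => ∫ t in (0)..ε, log t * (exp t + 1)⁻¹) (𝓝[>] 0) (𝓝 0) := by
      have hint : ∀ a b : ℝ, IntervalIntegrable (fun t => log t * (exp t + 1)⁻¹) volume a b :=
        fun a b => intervalIntegral.intervalIntegrable_log'.mul_continuousOn
          (by fun_prop (disch := intros; positivity))
      simpa using ((intervalIntegral.continuous_primitive hint 0).tendsto 0).mono_left
        nhdsWithin_le_nhds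
    exact ((hprim.add tendsto_integral_log_mul_inv_exp_sub_one_sub_inv).add_const _).sub
      (((tendsto_one_sub_exp_neg_mul_div 2).log two_ne_zero).const_mul _)
  rw [tendsto_nhds_unique (tendsto_const_nhds.congr' (eventually_nhdsWithin_of_forall hF)) hF_lim]
  ring

lemma integral_Ioi_log_mul_inv_exp_mul_add_one {c : ℝ} (hc : 0 < c) :
    ∫ t in Ioi 0, log t * (exp (c * t) + 1)⁻¹ =
      c⁻¹ * ((∫ t in Ioi 0, log t * (exp t + 1)⁻¹) - log c * log 2) := by
  have h := integral_comp_mul_left_Ioi (fun s => log (s / c) * (exp s + 1)⁻¹) 0 hc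
  simp only [mul_div_cancel_left₀ _ hc.ne', mul_zero, smul_eq_mul] at h
  have hlog2 : ∫ t in Ioi 0, (exp t + 1)⁻¹ = log 2 := by
    simpa [one_add_one_eq_two] using integral_Ioi_inv_exp_add_one 0
  rw [h, ← hlog2, ← integral_const_mul (log c),
    ← integral_sub integrableOn_log_mul_inv_exp_add_one
      ((integrableOn_Ioi_inv_exp_add_one 0).const_mul _)]
  congr 1
  refine setIntegral_congr_fun measurableSet_Ioi fun s hs => ?_
  rw [log_div (ne_of_gt hs) hc.ne']
  ring

lemma integral_Ioo_zero_one_eq_integral_Ioi_exp_neg {E : Type*} [NormedAddCommGroup E]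
    [NormedSpace ℝ E] (f : ℝ → E) :
    ∫ x in Ioo 0 1, f x = ∫ t in Ioi 0, exp (-t) • f (exp (-t)) := by
  have himage : (fun t => exp (-t)) '' Ioi 0 = Ioo 0 1 := by
    ext x
    constructor
    · rintro ⟨t, ht, rfl⟩
      exact ⟨exp_pos _, exp_lt_one_iff.2 (neg_lt_zero.2 ht)⟩
    · rintro ⟨hx0, hx1⟩
      exact ⟨-log x, neg_pos.2 (log_neg hx0 hx1), by simp [exp_log hx0]⟩
  rw [← himage, integral_image_eq_integral_abs_deriv_smul measurableSet_Ioi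
    (fun t _ => ((hasDerivAt_neg t).exp).hasDerivWithinAt)
    (fun a _ b _ hab => neg_injective (exp_injective hab))]
  simp

/-- For every positive integer `n`,
`∫_0^1 x^{n-1}/(1+x^n) · log(log(1/x)) dx = − (log 2 · log(2n²))/(2n)`. -/
theorem integral_loglog_inv_eq (n : ℕ) (hn : 1 ≤ n) :
    ∫ x in (0:ℝ)..1, x ^ (n - 1) / (1 + x ^ n) * Real.log (Real.log (1 / x)) =
      -(Real.log 2 * Real.log (2 * (n : ℝ) ^ 2)) / (2 * (n : ℝ)) := by
  have hn0 : (0 : ℝ) < n := by exact_mod_cast hn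
  have hintegrand : ∀ t : ℝ, exp (-t) * (exp (-t) ^ (n - 1) / (1 + exp (-t) ^ n) *
      log (log (1 / exp (-t)))) = log t * (exp (n * t) + 1)⁻¹ := by
    intro t
    have hpow : exp (-t) ^ n = (exp (n * t))⁻¹ := by rw [← exp_nat_mul, ← exp_neg, mul_neg]
    rw [one_div, ← exp_neg, neg_neg, log_exp, ← mul_assoc, ← mul_div_assoc, ← pow_succ',
      Nat.sub_add_cancel hn, hpow]
    field_simp
  rw [intervalIntegral.integral_of_le zero_le_one, integral_Ioc_eq_integral_Ioo,
    integral_Ioo_zero_one_eq_integral_Ioi_exp_neg]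
  simp_rw [smul_eq_mul, hintegrand]
  rw [integral_Ioi_log_mul_inv_exp_mul_add_one hn0, integral_Ioi_log_mul_inv_exp_add_one,
    log_mul two_ne_zero (by positivity), log_pow]
  field_simp
  ring
end

section
/- For all integers n ≥ 1 and N ≥ 1, the partial Euler–Maclaurin sums bracket the error in the harmonic approximation to γ: γ + 1/(2n) − ∑_{k=1}^{2N+1} B_{2k}/(2k · n^{2k}) < H_n − log n < γ + 1/(2n) − ∑_{k=1}^{2N} B_{2k}/(2k · n^{2k}), with both inequalities strict. -/
/-!
Integrating `B_k(t) / (x + t)^(k+1)` by parts over `[0, 1]` lowers `k` by one, and `k = 0` gives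
`log (x + 1) - log x`. Iterating yields, for `x > 0`, the Euler–Maclaurin formula for
`log (x + 1) - log x` with remainder `∫₀¹ (B_{2m+2}(t) - B_{2m+2}) / (x + t)^(2m+3) dt`.
By the Fourier expansion of `B_{2m+2}` this remainder has the sign of `(-1)^(m+1)`, so
`H_n - log n - 1/(2n) + ∑_{k ≤ m} B_{2k} / (2k n^(2k))`, whose consecutive differences are these
remainders at `x = n`, is strictly monotone in `n ≥ 1`, in a direction fixed by the parity of `m`.
It tends to `γ`, hence lies strictly on one side of `γ`.
-/

open Real Filter Topology MeasureTheory intervalIntegral Set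
open scoped Nat

theorem intervalIntegrable_div_add_pow {g : ℝ → ℝ} (hg : Continuous g) {x : ℝ} (hx : 0 < x)
    (j : ℕ) : IntervalIntegrable (fun t => g t / (x + t) ^ j) volume 0 1 := by
  refine ContinuousOn.intervalIntegrable (hg.continuousOn.div (by fun_prop) fun t ht => ?_)
  rw [uIcc_of_le zero_le_one] at ht
  have : 0 < x + t := by linarith [ht.1]
  positivity

theorem integral_div_add_pow_by_parts {F f : ℝ → ℝ} {x : ℝ} (hx : 0 < x) (k : ℕ)
    (hF : ∀ t, HasDerivAt F ((k + 1) * f t) t) (hf : Continuous f) :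
    ∫ t in 0..1, F t / (x + t) ^ (k + 2) =
      (F 0 / x ^ (k + 1) - F 1 / (x + 1) ^ (k + 1)) / (k + 1) +
        ∫ t in 0..1, f t / (x + t) ^ (k + 1) := by
  have hFc : Continuous F := continuous_iff_continuousAt.2 fun t => (hF t).continuousAt
  have hderiv : ∀ t ∈ uIcc (0 : ℝ) 1,
      HasDerivAt (fun t => -F t / ((k + 1) * (x + t) ^ (k + 1)))
        (F t / (x + t) ^ (k + 2) - f t / (x + t) ^ (k + 1)) t := by
    intro t ht
    rw [uIcc_of_le zero_le_one] at ht
    have hxt : 0 < x + t := by linarith [ht.1]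
    have hpow : HasDerivAt (fun t => (k + 1) * (x + t) ^ (k + 1))
        ((k + 1) * ((k + 1 : ℕ) * (x + t) ^ k)) t := by
      simpa using (((hasDerivAt_id t).const_add x).pow (k + 1)).const_mul ((k : ℝ) + 1)
    refine ((hF t).neg.fun_div hpow (by positivity)).congr_deriv ?_
    push_cast [Pi.neg_apply]
    field_simp
    ring
  have hF_int := intervalIntegrable_div_add_pow hFc hx (k + 2)
  have hf_int := intervalIntegrable_div_add_pow hf hx (k + 1)
  have hFTC := integral_eq_sub_of_hasDerivAt hderiv (hF_int.sub hf_int)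
  rw [integral_sub hF_int hf_int] at hFTC
  rw [eq_add_of_sub_eq hFTC, add_zero, mul_comm ((k : ℝ) + 1), mul_comm ((k : ℝ) + 1),
    ← div_div, ← div_div]
  ring

theorem integral_bernoulliFun_succ_div_add_pow {x : ℝ} (hx : 0 < x) (k : ℕ) :
    ∫ t in 0..1, bernoulliFun (k + 1) t / (x + t) ^ (k + 2) =
      (bernoulliFun (k + 1) 0 / x ^ (k + 1) - bernoulliFun (k + 1) 1 / (x + 1) ^ (k + 1)) /
          (k + 1) + ∫ t in 0..1, bernoulliFun k t / (x + t) ^ (k + 1) :=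
  integral_div_add_pow_by_parts hx k
    (fun t => by simpa using hasDerivAt_bernoulliFun (k + 1) t) (continuous_bernoulliFun k)

noncomputable def bernoulliCorrection (m : ℕ) (x : ℝ) : ℝ :=
  ∑ k ∈ Finset.Icc 1 m, (bernoulli (2 * k) : ℝ) / (2 * (k : ℝ) * x ^ (2 * k))

theorem bernoulliCorrection_succ (m : ℕ) (x : ℝ) :
    bernoulliCorrection (m + 1) x =
      bernoulliCorrection m x +
        (bernoulli (2 * m + 2) : ℝ) / ((2 * m + 2) * x ^ (2 * m + 2)) := by
  rw [bernoulliCorrection, Finset.sum_Icc_succ_top (by omega), ← bernoulliCorrection]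
  push_cast
  ring_nf

theorem integral_bernoulliFun_odd_div_add_pow {x : ℝ} (hx : 0 < x) (m : ℕ) :
    ∫ t in 0..1, bernoulliFun (2 * m + 1) t / (x + t) ^ (2 * m + 2) =
      log (x + 1) - log x - 1 / (2 * x) - 1 / (2 * (x + 1)) +
        bernoulliCorrection m x - bernoulliCorrection m (x + 1) := by
  induction m with
  | zero =>
    have hlog : ∫ t in 0..1, 1 / (x + t) = log (x + 1) - log x := by
      rw [integral_comp_add_left (fun t => 1 / t), add_zero,
        integral_one_div_of_pos hx (by linarith), log_div (by linarith) hx.ne']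
    rw [show 2 * 0 + 1 = 0 + 1 by rfl, integral_bernoulliFun_succ_div_add_pow hx 0]
    simp only [zero_add, pow_one, bernoulliFun_zero]
    rw [hlog]
    norm_num [bernoulliFun_one, bernoulliCorrection]
    ring
  | succ m ih =>
    have hodd : bernoulli (2 * m + 3) = 0 :=
      bernoulli_eq_zero_of_odd ⟨m + 1, by ring⟩ (by omega)
    rw [show 2 * (m + 1) + 1 = 2 * m + 2 + 1 by ring, show 2 * (m + 1) + 2 = 2 * m + 2 + 2 by ring,
      integral_bernoulliFun_succ_div_add_pow hx (2 * m + 2),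
      bernoulliFun_endpoints_eq_of_ne_one (by omega), bernoulliFun_eval_zero, hodd,
      integral_bernoulliFun_succ_div_add_pow hx (2 * m + 1),
      bernoulliFun_endpoints_eq_of_ne_one (by omega), bernoulliFun_eval_zero, ih,
      bernoulliCorrection_succ, bernoulliCorrection_succ]
    push_cast
    field_simp
    ring

-- Subtracting `B_{2m+2}` makes the numerator vanish at both ends of `[0, 1]` and keeps it of one
-- sign in between.
noncomputable def eulerMaclaurinRemainder (m : ℕ) (x : ℝ) : ℝ :=
  ∫ t in 0..1, (bernoulliFun (2 * m + 2) t - bernoulli (2 * m + 2)) / (x + t) ^ (2 * m + 3)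

theorem eulerMaclaurinRemainder_eq {x : ℝ} (hx : 0 < x) (m : ℕ) :
    eulerMaclaurinRemainder m x =
      log (x + 1) - log x - 1 / (2 * x) - 1 / (2 * (x + 1)) +
        bernoulliCorrection m x - bernoulliCorrection m (x + 1) := by
  rw [eulerMaclaurinRemainder, integral_div_add_pow_by_parts hx (2 * m + 1)
      (fun t => ((hasDerivAt_bernoulliFun _ t).sub_const _).congr_deriv (by push_cast; ring))
      (continuous_bernoulliFun _), ← integral_bernoulliFun_odd_div_add_pow hx m]
  simp [bernoulliFun_endpoints_eq_of_ne_one, bernoulliFun_eval_zero]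

-- Compare the Fourier series `∑ cos (2πnt) / n^(2k)` of `B_{2k}(t)` termwise with its value at
-- `t = 0`: the term `n = 1` is strictly smaller.
theorem neg_one_pow_mul_bernoulliFun_sub_bernoulli_pos {k : ℕ} (hk : k ≠ 0) {t : ℝ}
    (ht : t ∈ Ioo 0 1) : 0 < (-1) ^ k * (bernoulliFun (2 * k) t - bernoulli (2 * k)) := by
  have h2πt : 0 < 2 * π * t ∧ 2 * π * t < 2 * π :=
    ⟨by have := ht.1; positivity, mul_lt_of_lt_one_right two_pi_pos ht.2⟩
  have hcos_lt : cos (2 * π * t) < 1 := (cos_le_one _).lt_of_ne fun h =>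
    h2πt.1.ne' ((cos_eq_one_iff_of_lt_of_lt (by linarith) h2πt.2).1 h)
  have hlt : (-1) ^ (k + 1) * (2 * π) ^ (2 * k) / 2 / (2 * k)! * bernoulliFun (2 * k) t <
      (-1) ^ (k + 1) * (2 * π) ^ (2 * k) / 2 / (2 * k)! * bernoulliFun (2 * k) 0 :=
    hasSum_lt (i := 1)
      (fun n => mul_le_mul_of_nonneg_left (by simpa using cos_le_one _) (by positivity))
      (by simpa using hcos_lt) (hasSum_one_div_nat_pow_mul_cos hk (Ioo_subset_Icc_self ht))
      (hasSum_one_div_nat_pow_mul_cos hk (left_mem_Icc.2 zero_le_one))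
  have hd : 0 < (2 * π) ^ (2 * k) / 2 / (2 * k)! := by positivity
  refine (mul_pos_iff_of_pos_left hd).1 ?_
  rw [pow_succ, bernoulliFun_eval_zero] at hlt
  linear_combination hlt

theorem neg_one_pow_mul_eulerMaclaurinRemainder_pos (m : ℕ) {x : ℝ} (hx : 0 < x) :
    0 < (-1) ^ (m + 1) * eulerMaclaurinRemainder m x := by
  rw [eulerMaclaurinRemainder, ← intervalIntegral.integral_const_mul]
  refine intervalIntegral_pos_of_pos_on
    ((intervalIntegrable_div_add_pow (by fun_prop) hx _).const_mul _) (fun t ht => ?_) zero_lt_one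
  have hxt : 0 < x + t := by linarith [ht.1]
  rw [mul_div_assoc']
  exact div_pos (by simpa [mul_add] using
    neg_one_pow_mul_bernoulliFun_sub_bernoulli_pos m.succ_ne_zero ht) (by positivity)

noncomputable def harmonicSubLogCorrected (m n : ℕ) : ℝ :=
  harmonic n - log n - 1 / (2 * n) + bernoulliCorrection m n

theorem harmonicSubLogCorrected_sub_succ {n : ℕ} (hn : 1 ≤ n) (m : ℕ) :
    harmonicSubLogCorrected m n - harmonicSubLogCorrected m (n + 1) =
      eulerMaclaurinRemainder m n := by
  rw [eulerMaclaurinRemainder_eq (by exact_mod_cast hn) m, harmonicSubLogCorrected,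
    harmonicSubLogCorrected, harmonic_succ]
  push_cast
  field_simp
  ring

theorem tendsto_bernoulliCorrection (m : ℕ) :
    Tendsto (fun n : ℕ => bernoulliCorrection m n) atTop (𝓝 0) := by
  unfold bernoulliCorrection
  rw [← Finset.sum_const_zero (s := Finset.Icc 1 m)]
  refine tendsto_finsetSum _ fun k hk => ?_
  have hk : 0 < k := (Finset.mem_Icc.1 hk).1
  have hpow : Tendsto (fun n : ℕ => (n : ℝ) ^ (2 * k)) atTop atTop :=
    (tendsto_pow_atTop (by omega)).comp tendsto_natCast_atTop_atTop
  exact tendsto_const_nhds.div_atTop (hpow.const_mul_atTop (by positivity))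

theorem tendsto_harmonicSubLogCorrected (m : ℕ) :
    Tendsto (harmonicSubLogCorrected m) atTop (𝓝 eulerMascheroniConstant) := by
  have h_half_inv : Tendsto (fun n : ℕ => 1 / (2 * (n : ℝ))) atTop (𝓝 0) :=
    tendsto_const_nhds.div_atTop (tendsto_natCast_atTop_atTop.const_mul_atTop two_pos)
  rw [← sub_zero eulerMascheroniConstant, ← add_zero (_ - _)]
  exact (tendsto_harmonic_sub_log.sub h_half_inv).add (tendsto_bernoulliCorrection m)

theorem StrictAnti.lt_of_tendsto {α : Type*} [TopologicalSpace α] [Preorder α]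
    [OrderClosedTopology α] {u : ℕ → α} {a : α} (hu : StrictAnti u) (h : Tendsto u atTop (𝓝 a))
    (n : ℕ) : a < u n :=
  (hu.antitone.le_of_tendsto h (n + 1)).trans_lt (hu n.lt_succ_self)

theorem neg_one_pow_mul_harmonicSubLogCorrected_sub_pos (m : ℕ) {n : ℕ} (hn : 1 ≤ n) :
    0 < (-1) ^ (m + 1) * (harmonicSubLogCorrected m n - eulerMascheroniConstant) := by
  obtain ⟨n, rfl⟩ := Nat.exists_eq_add_of_le' hn
  have hstep (k : ℕ) : (-1) ^ (m + 1) * harmonicSubLogCorrected m (k + 1 + 1) <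
      (-1) ^ (m + 1) * harmonicSubLogCorrected m (k + 1) := by
    have := neg_one_pow_mul_eulerMaclaurinRemainder_pos m (x := (k + 1 : ℕ)) (by positivity)
    rw [← harmonicSubLogCorrected_sub_succ (by omega), mul_sub] at this
    linarith
  have hlim := ((tendsto_harmonicSubLogCorrected m).comp (tendsto_add_atTop_nat 1)).const_mul
    ((-1 : ℝ) ^ (m + 1))
  rw [mul_sub, sub_pos]
  exact (strictAnti_nat_of_succ_lt hstep).lt_of_tendsto hlim n

theorem harmonic_sub_log_bernoulli_bounds_general (n N : ℕ) (hn : 1 ≤ n) :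
    Real.eulerMascheroniConstant + 1 / (2 * (n : ℝ)) -
        ∑ k ∈ Finset.Icc 1 (2 * N + 1),
          (bernoulli (2 * k) : ℝ) / (2 * (k : ℝ) * (n : ℝ) ^ (2 * k)) <
      (harmonic n : ℝ) - Real.log n ∧
    (harmonic n : ℝ) - Real.log n <
      Real.eulerMascheroniConstant + 1 / (2 * (n : ℝ)) -
        ∑ k ∈ Finset.Icc 1 (2 * N),
          (bernoulli (2 * k) : ℝ) / (2 * (k : ℝ) * (n : ℝ) ^ (2 * k)) := by
  have h_lower := neg_one_pow_mul_harmonicSubLogCorrected_sub_pos (2 * N + 1) hn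
  have h_upper := neg_one_pow_mul_harmonicSubLogCorrected_sub_pos (2 * N) hn
  rw [Even.neg_one_pow ⟨N + 1, by ring⟩, one_mul] at h_lower
  rw [Odd.neg_one_pow ⟨N, rfl⟩, neg_one_mul, neg_pos, sub_neg] at h_upper
  unfold harmonicSubLogCorrected bernoulliCorrection at h_lower h_upper
  constructor <;> linarith

/-- For all integers `n ≥ 1` and `N ≥ 1`, the partial Euler–Maclaurin sums bracket the error
in the harmonic approximation to `γ`:
`γ + 1/(2n) − ∑_{k=1}^{2N+1} B_{2k}/(2k·n^{2k}) < H_n − log n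
  < γ + 1/(2n) − ∑_{k=1}^{2N} B_{2k}/(2k·n^{2k})`, with both inequalities strict. -/
theorem harmonic_sub_log_bernoulli_bounds (n N : ℕ) (hn : 1 ≤ n) (hN : 1 ≤ N) :
    Real.eulerMascheroniConstant + 1 / (2 * (n : ℝ)) -
        ∑ k ∈ Finset.Icc 1 (2 * N + 1),
          (bernoulli (2 * k) : ℝ) / (2 * (k : ℝ) * (n : ℝ) ^ (2 * k)) <
      (harmonic n : ℝ) - Real.log n ∧
    (harmonic n : ℝ) - Real.log n <
      Real.eulerMascheroniConstant + 1 / (2 * (n : ℝ)) -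
        ∑ k ∈ Finset.Icc 1 (2 * N),
          (bernoulli (2 * k) : ℝ) / (2 * (k : ℝ) * (n : ℝ) ^ (2 * k)) :=
  harmonic_sub_log_bernoulli_bounds_general n N hn
end

section
/- The alternating series ∑_{k=2}^∞ (−1)^k ζ(k)/k converges to γ, in the sense that the partial sums ∑_{k=2}^N (−1)^k ζ(k)/k tend to γ as N → ∞. -/
/-!
Since `log (1 + x) = ∑_{k ≥ 1} (-1)^(k+1) x^k / k`, each term of
`γ = ∑_{m ≥ 1} (1/m - log (1 + 1/m))` expands as `∑_{k ≥ 2} (-1)^k / (k m^k)`.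
For `m ≥ 2` the double series converges absolutely, so summing over `m` first gives
`∑_{k ≥ 2} (-1)^k (ζ(k) - 1) / k = γ - (1 - log 2)`. The remaining row `m = 1` is the
conditionally convergent `∑_{k ≥ 2} (-1)^k / k = 1 - log 2`, whose value comes from the even
partial sums `H_{2N} - H_N` of the alternating harmonic series.
-/

/-- The Riemann zeta function for a real argument `s > 1`, `ζ(s) = ∑_{n=1}^∞ n^{−s}`. -/
noncomputable def zetaReal (s : ℝ) : ℝ := ∑' n : ℕ, 1 / ((n : ℝ) + 1) ^ s

open Filter Real Finset Topology

theorem tendsto_sum_Icc_of_tendsto_sum_range {M : Type*} [AddCommMonoid M] [TopologicalSpace M]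
    {g : ℕ → M} {l : M} (a : ℕ)
    (h : Tendsto (fun n => ∑ i ∈ range n, g (a + i)) atTop (𝓝 l)) :
    Tendsto (fun n => ∑ i ∈ Icc a n, g i) atTop (𝓝 l) := by
  refine (h.comp ((tendsto_sub_atTop_nat a).comp (tendsto_add_atTop_nat 1))).congr fun n => ?_
  rw [← Finset.Ico_add_one_right_eq_Icc, Finset.sum_Ico_eq_sum_range]
  rfl

theorem hasSum_neg_one_pow_mul_pow_add_two_div {x : ℝ} (hx : |x| < 1) :
    HasSum (fun j : ℕ => (-1) ^ j * x ^ (j + 2) / (j + 2)) (x - log (1 + x)) := by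
  have h := (hasSum_nat_add_iff' 1).mpr
    (hasSum_pow_div_log_of_abs_lt_one (x := -x) (by simpa))
  rw [show -log (1 - -x) - ∑ i ∈ range 1, (-x) ^ (i + 1) / (i + 1) = x - log (1 + x) by
    simp; ring] at h
  refine h.congr_fun fun j => ?_
  push_cast
  ring

theorem hasSum_zetaReal {s : ℝ} (hs : 1 < s) :
    HasSum (fun n : ℕ => 1 / ((n : ℝ) + 1) ^ s) (zetaReal s) := by
  have h := (summable_nat_add_iff 1).mpr (summable_one_div_nat_rpow.mpr hs)
  unfold zetaReal
  exact_mod_cast h.hasSum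

theorem hasSum_one_div_add_two_rpow {s : ℝ} (hs : 1 < s) :
    HasSum (fun n : ℕ => 1 / ((n : ℝ) + 2) ^ s) (zetaReal s - 1) := by
  have h := (hasSum_nat_add_iff' 1).mpr (hasSum_zetaReal hs)
  simpa [add_assoc, one_add_one_eq_two] using h

theorem sum_range_inv_add_two_sub_log (N : ℕ) :
    ∑ n ∈ range N, (1 / ((n : ℝ) + 2) - log (1 + 1 / ((n : ℝ) + 2)))
      = eulerMascheroniSeq (N + 1) - (1 - log 2) := by
  induction N with
  | zero => norm_num [eulerMascheroniSeq]
  | succ N ih =>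
    have hlog : log (1 + 1 / ((N : ℝ) + 2)) = log ((N : ℝ) + 3) - log ((N : ℝ) + 2) := by
      rw [← log_div (by positivity) (by positivity)]
      congr 1
      field_simp
      ring
    rw [sum_range_succ, ih, hlog, eulerMascheroniSeq, eulerMascheroniSeq, harmonic_succ (N + 1)]
    push_cast
    ring_nf

theorem hasSum_inv_add_two_sub_log :
    HasSum (fun n : ℕ => 1 / ((n : ℝ) + 2) - log (1 + 1 / ((n : ℝ) + 2)))
      (eulerMascheroniConstant - (1 - log 2)) := by
  refine (hasSum_iff_tendsto_nat_of_nonneg (fun n => ?_) _).mpr ?_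
  · have := log_le_sub_one_of_pos (x := 1 + 1 / ((n : ℝ) + 2)) (by positivity)
    linarith
  · simp only [sum_range_inv_add_two_sub_log]
    exact (tendsto_eulerMascheroniSeq.comp (tendsto_add_atTop_nat 1)).sub_const _

/-- The term `(-1)^k / (k m^k)` of the double series, with `m = n + 2` and `k = j + 2`. -/
noncomputable def zetaLogTerm (p : ℕ × ℕ) : ℝ :=
  (-1) ^ p.2 * (1 / ((p.1 : ℝ) + 2)) ^ (p.2 + 2) / (p.2 + 2)

theorem abs_zetaLogTerm_le (n j : ℕ) :
    |zetaLogTerm (n, j)| ≤ (1 / ((n : ℝ) + 2)) ^ 2 * (1 / 2) ^ j := by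
  have hx : 1 / ((n : ℝ) + 2) ≤ 1 / 2 := by gcongr; linarith [n.cast_nonneg (α := ℝ)]
  rw [zetaLogTerm, abs_div, abs_mul, abs_pow, abs_neg, abs_one, one_pow, one_mul,
    abs_of_pos (by positivity), abs_of_pos (by positivity)]
  calc (1 / ((n : ℝ) + 2)) ^ (j + 2) / (j + 2)
      ≤ (1 / ((n : ℝ) + 2)) ^ (j + 2) :=
        div_le_self (by positivity) (by linarith [j.cast_nonneg (α := ℝ)])
    _ = (1 / ((n : ℝ) + 2)) ^ 2 * (1 / ((n : ℝ) + 2)) ^ j := by ring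
    _ ≤ (1 / ((n : ℝ) + 2)) ^ 2 * (1 / 2) ^ j := by gcongr

theorem summable_zetaLogTerm : Summable zetaLogTerm := by
  have hsq : Summable fun n : ℕ => (1 / ((n : ℝ) + 2)) ^ 2 := by
    have := (summable_nat_add_iff 2).mpr (summable_one_div_nat_pow.mpr one_lt_two)
    exact_mod_cast this.congr fun n => by rw [one_div_pow]
  have hgeo : Summable fun j : ℕ => (1 / 2 : ℝ) ^ j := summable_geometric_two
  refine Summable.of_norm_bounded
    (hsq.mul_of_nonneg hgeo (fun _ => by positivity) (fun _ => by positivity)) fun p => ?_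
  exact (Real.norm_eq_abs _).trans_le (abs_zetaLogTerm_le p.1 p.2)

theorem hasSum_zetaLogTerm_row (n : ℕ) :
    HasSum (fun j => zetaLogTerm (n, j)) (1 / ((n : ℝ) + 2) - log (1 + 1 / ((n : ℝ) + 2))) := by
  have hx : |1 / ((n : ℝ) + 2)| < 1 := by
    rw [abs_of_pos (by positivity), div_lt_one (by positivity)]
    linarith [n.cast_nonneg (α := ℝ)]
  have h := hasSum_neg_one_pow_mul_pow_add_two_div hx
  unfold zetaLogTerm
  exact h

theorem hasSum_zetaLogTerm_column (j : ℕ) :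
    HasSum (fun n => zetaLogTerm (n, j)) ((-1) ^ j * (zetaReal (j + 2) - 1) / (j + 2)) := by
  have h := (hasSum_one_div_add_two_rpow (s := j + 2)
    (by linarith [j.cast_nonneg (α := ℝ)])).mul_left ((-1 : ℝ) ^ j / (j + 2))
  rw [show (-1 : ℝ) ^ j * (zetaReal (j + 2) - 1) / (j + 2)
    = (-1) ^ j / (j + 2) * (zetaReal (j + 2) - 1) by ring]
  refine h.congr_fun fun n => ?_
  rw [zetaLogTerm, show (j : ℝ) + 2 = ((j + 2 : ℕ) : ℝ) by push_cast; ring, rpow_natCast,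
    one_div_pow]
  push_cast
  ring

theorem hasSum_neg_one_pow_mul_zetaReal_sub_one_div :
    HasSum (fun j : ℕ => (-1) ^ j * (zetaReal (j + 2) - 1) / (j + 2))
      (eulerMascheroniConstant - (1 - log 2)) := by
  have hF := summable_zetaLogTerm.hasSum
  have hrows := hF.prod_fiberwise hasSum_zetaLogTerm_row
  rw [hrows.unique hasSum_inv_add_two_sub_log] at hF
  exact ((Equiv.prodComm ℕ ℕ).hasSum_iff.mpr hF).prod_fiberwise hasSum_zetaLogTerm_column

theorem sum_range_two_mul_neg_one_pow_div (N : ℕ) :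
    ∑ j ∈ range (2 * N), (-1 : ℝ) ^ j / (j + 1) = harmonic (2 * N) - harmonic N := by
  induction N with
  | zero => simp
  | succ N ih =>
    rw [mul_add_one, sum_range_succ, sum_range_succ, ih, harmonic_succ (2 * N + 1),
      harmonic_succ (2 * N), harmonic_succ N, pow_succ, pow_mul]
    push_cast
    field_simp
    ring

theorem tendsto_sum_range_neg_one_pow_div :
    Tendsto (fun n => ∑ j ∈ range n, (-1 : ℝ) ^ j / (j + 1)) atTop (𝓝 (log 2)) := by
  have hanti : Antitone fun j : ℕ => 1 / ((j : ℝ) + 1) := fun _ _ hab =>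
    one_div_le_one_div_of_le (by positivity) (by gcongr)
  obtain ⟨l, hl⟩ := hanti.tendsto_alternating_series_of_tendsto_zero
    tendsto_one_div_add_atTop_nhds_zero_nat
  simp only [mul_one_div] at hl
  have h2 : Tendsto (fun N : ℕ => 2 * N) atTop atTop := tendsto_id.const_mul_atTop' two_pos
  have heven : Tendsto (fun N : ℕ => ∑ j ∈ range (2 * N), (-1 : ℝ) ^ j / (j + 1))
      atTop (𝓝 (log 2)) := by
    have h :=
      ((tendsto_harmonic_sub_log.comp h2).sub tendsto_harmonic_sub_log).add_const (log 2)
    rw [sub_self, zero_add] at h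
    refine h.congr' ?_
    filter_upwards [eventually_ne_atTop 0] with N hN
    rw [sum_range_two_mul_neg_one_pow_div, Function.comp_apply, Nat.cast_mul, Nat.cast_two,
      log_mul two_ne_zero (by exact_mod_cast hN)]
    ring
  rwa [tendsto_nhds_unique (hl.comp h2) heven] at hl

theorem tendsto_sum_range_neg_one_pow_div_add_two :
    Tendsto (fun n => ∑ j ∈ range n, (-1 : ℝ) ^ j / (j + 2)) atTop (𝓝 (1 - log 2)) := by
  refine ((tendsto_const_nhds (x := (1 : ℝ))).sub
    (tendsto_sum_range_neg_one_pow_div.comp (tendsto_add_atTop_nat 1))).congr fun n => ?_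
  rw [Function.comp_apply, sum_range_succ']
  push_cast
  simp only [pow_succ, mul_neg_one, neg_div, sum_neg_distrib, add_assoc, one_add_one_eq_two]
  norm_num

/-- The partial sums `∑_{k=2}^N (−1)^k ζ(k)/k` tend to `γ` as `N → ∞`. -/
theorem tendsto_sum_neg_one_pow_zeta_div :
    Filter.Tendsto (fun N : ℕ => ∑ k ∈ Finset.Icc 2 N, (-1 : ℝ) ^ k * zetaReal k / (k : ℝ))
      Filter.atTop (nhds Real.eulerMascheroniConstant) := by
  refine tendsto_sum_Icc_of_tendsto_sum_range 2 ?_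
  have h := hasSum_neg_one_pow_mul_zetaReal_sub_one_div.tendsto_sum_nat.add
    tendsto_sum_range_neg_one_pow_div_add_two
  rw [sub_add_cancel] at h
  refine h.congr fun n => ?_
  rw [← sum_add_distrib]
  refine sum_congr rfl fun j _ => ?_
  rw [pow_add, neg_one_sq, one_mul, add_comm 2 j]
  push_cast
  ring
end

section
/- The series ∑_{k=1}^∞ (−1)^k (log k)/k converges to log 2 · (γ − (log 2)/2), in the sense that the partial sums ∑_{k=1}^N (−1)^k (log k)/k tend to log 2 · (γ − (log 2)/2) as N → ∞. -/
/-!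
With `S N = ∑_{k ≤ N} log k / k`, pairing the terms gives
`∑_{k ≤ 2N} (-1)^k log k / k = 2 ∑_{j ≤ N} log (2j) / (2j) - S (2N) = log 2 · H_N + S N - S (2N)`.
Since `log x / x` is decreasing for `x ≥ e` with antiderivative `(log x)^2 / 2`, comparing sum and
antiderivative shows that `S N - (log N)^2 / 2` converges. Hence
`S N - S (2N) = -log 2 · log N - (log 2)^2 / 2 + o(1)`, and `H_N - log N → γ` gives the limit along
even `N`; the odd partial sums differ from it by `log (2N+1) / (2N+1) → 0`.
-/

open Real Filter Finset Topology Set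

theorem tendsto_of_tendsto_two_mul_of_tendsto_two_mul_add_one {α : Type*} {u : ℕ → α}
    {l : Filter α} (h_even : Tendsto (fun n => u (2 * n)) atTop l)
    (h_odd : Tendsto (fun n => u (2 * n + 1)) atTop l) : Tendsto u atTop l := by
  intro s hs
  obtain ⟨N₀, hN₀⟩ := eventually_atTop.1 (h_even hs)
  obtain ⟨N₁, hN₁⟩ := eventually_atTop.1 (h_odd hs)
  refine eventually_atTop.2 ⟨2 * max N₀ N₁, fun n hn => ?_⟩
  obtain ⟨m, rfl | rfl⟩ := n.even_or_odd'
  · exact hN₀ m (by omega)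
  · exact hN₁ m (by omega)

theorem sum_Icc_two_mul_neg_one_pow_mul {R : Type*} [CommRing R] (t : ℕ → R) (N : ℕ) :
    ∑ k ∈ Icc 1 (2 * N), (-1) ^ k * t k
      = 2 * ∑ j ∈ Icc 1 N, t (2 * j) - ∑ k ∈ Icc 1 (2 * N), t k := by
  induction N with
  | zero => simp
  | succ n ih =>
    rw [sum_Icc_succ_top (by omega : 1 ≤ n + 1), show 2 * (n + 1) = 2 * n + 1 + 1 by ring,
      sum_Icc_succ_top (by omega), sum_Icc_succ_top (by omega), sum_Icc_succ_top (by omega),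
      sum_Icc_succ_top (by omega), ih]
    simp only [pow_succ, pow_mul]
    ring

theorem AntitoneOn.le_sub_le_of_hasDerivAt {f F : ℝ → ℝ} {a x : ℝ} (hf : AntitoneOn f (Ici a))
    (hF : ∀ y ∈ Ici a, HasDerivAt F (f y) y) (hx : a ≤ x) :
    f (x + 1) ≤ F (x + 1) - F x ∧ F (x + 1) - F x ≤ f x := by
  obtain ⟨c, hc, hslope⟩ := exists_hasDerivAt_eq_slope F f (lt_add_one x)
    (fun y hy => (hF y (hx.trans hy.1)).continuousAt.continuousWithinAt)
    (fun y hy => hF y (hx.trans hy.1.le))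
  rw [add_sub_cancel_left, div_one] at hslope
  rw [← hslope]
  exact ⟨hf (hx.trans hc.1.le) (show a ≤ x + 1 by linarith) hc.2.le,
    hf hx (hx.trans hc.1.le) hc.1.le⟩

theorem AntitoneOn.exists_tendsto_sum_Icc_sub {f F : ℝ → ℝ} {a : ℝ} (hf : AntitoneOn f (Ici a))
    (hf_bdd : BddBelow (f '' Ici a)) (hF : ∀ x ∈ Ici a, HasDerivAt F (f x) x) :
    ∃ c, Tendsto (fun N : ℕ => ∑ k ∈ Icc 1 N, f k - F N) atTop (𝓝 c) := by
  set g : ℕ → ℝ := fun N => ∑ k ∈ Icc 1 N, f k - F N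
  obtain ⟨b, hb⟩ := hf_bdd
  set n₀ := ⌈a⌉₊
  have ha : ∀ N : ℕ, n₀ ≤ N → a ≤ N := fun N hN => (Nat.le_ceil a).trans (by exact_mod_cast hN)
  have hstep : ∀ N : ℕ, n₀ ≤ N → g (N + 1) ≤ g N ∧ g N - f N ≤ g (N + 1) - f ↑(N + 1) :=
    fun N hN => by
      have hg : g (N + 1) - g N = f (N + 1) - (F (N + 1) - F N) := by
        simp only [g, sum_Icc_succ_top (Nat.le_add_left 1 N), Nat.cast_succ]
        ring
      have := hf.le_sub_le_of_hasDerivAt hF (ha N hN)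
      push_cast
      constructor <;> linarith
  have hg_anti : Antitone fun m => g (m + n₀) := antitone_nat_of_succ_le fun m => by
    simpa only [Nat.add_right_comm] using (hstep (m + n₀) (Nat.le_add_left _ _)).1
  have hgf_mono : Monotone fun m => g (m + n₀) - f ↑(m + n₀) := monotone_nat_of_le_succ fun m => by
    simpa only [Nat.add_right_comm] using (hstep (m + n₀) (Nat.le_add_left _ _)).2
  have hg_bdd : BddBelow (range fun m => g (m + n₀)) := by
    refine ⟨g n₀ - f n₀ + b, ?_⟩
    rintro _ ⟨m, rfl⟩
    have h₁ := hgf_mono (Nat.zero_le m)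
    have h₂ : b ≤ f ↑(m + n₀) := hb ⟨_, ha _ (Nat.le_add_left _ _), rfl⟩
    simp only [zero_add] at h₁
    linarith
  exact ⟨_, (tendsto_add_atTop_iff_nat n₀).1 (tendsto_atTop_ciInf hg_anti hg_bdd)⟩

theorem hasDerivAt_log_sq_div_two {x : ℝ} (hx : x ≠ 0) :
    HasDerivAt (fun y => log y ^ 2 / 2) (log x / x) x :=
  (((hasDerivAt_log hx).fun_pow 2).div_const 2).congr_deriv (by simp; field_simp)

/-- The limit is the Stieltjes constant `γ₁`. -/
theorem exists_tendsto_sum_Icc_log_div_sub_log_sq :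
    ∃ c, Tendsto (fun N : ℕ => ∑ k ∈ Icc 1 N, log k / k - log N ^ 2 / 2) atTop (𝓝 c) := by
  refine log_div_self_antitoneOn.exists_tendsto_sum_Icc_sub ⟨0, ?_⟩
    fun x hx => hasDerivAt_log_sq_div_two ((exp_pos 1).trans_le hx).ne'
  rintro _ ⟨x, hx, rfl⟩
  have hx₁ : 1 ≤ x := (one_le_exp zero_le_one).trans hx
  exact div_nonneg (log_nonneg hx₁) (zero_le_one.trans hx₁)

theorem tendsto_log_natCast_div_natCast : Tendsto (fun n : ℕ => log n / n) atTop (𝓝 0) :=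
  ((tendsto_pow_log_div_mul_add_atTop 1 0 1 one_ne_zero).comp tendsto_natCast_atTop_atTop).congr
    fun n => by simp

theorem sum_Icc_two_mul_neg_one_pow_mul_log_div (N : ℕ) :
    ∑ k ∈ Icc 1 (2 * N), (-1) ^ k * log k / k
      = log 2 * harmonic N + ∑ k ∈ Icc 1 N, log k / k - ∑ k ∈ Icc 1 (2 * N), log k / k := by
  simp only [mul_div_assoc]
  rw [sum_Icc_two_mul_neg_one_pow_mul (fun k : ℕ => log k / k), harmonic_eq_sum_Icc]
  push_cast
  rw [mul_sum, mul_sum, ← sum_add_distrib]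
  congr 1
  refine sum_congr rfl fun j hj => ?_
  rw [log_mul two_ne_zero (Nat.cast_ne_zero.2 (Nat.one_le_iff_ne_zero.1 (mem_Icc.1 hj).1))]
  field_simp

/-- The partial sums `∑_{k=1}^N (−1)^k (log k)/k` tend to `log 2 · (γ − (log 2)/2)`. -/
theorem tendsto_sum_neg_one_pow_log_div :
    Filter.Tendsto (fun N : ℕ => ∑ k ∈ Finset.Icc 1 N, (-1 : ℝ) ^ k * Real.log k / (k : ℝ))
      Filter.atTop
      (nhds (Real.log 2 * (Real.eulerMascheroniConstant - Real.log 2 / 2))) := by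
  obtain ⟨c, hc⟩ := exists_tendsto_sum_Icc_log_div_sub_log_sq
  have h_even : Tendsto (fun N : ℕ => ∑ k ∈ Icc 1 (2 * N), (-1 : ℝ) ^ k * log k / k) atTop
      (𝓝 (log 2 * (eulerMascheroniConstant - log 2 / 2))) := by
    have h := (((tendsto_harmonic_sub_log.const_mul (log 2)).add hc).sub
      (hc.comp (tendsto_atTop_mono (fun N => (by omega : N ≤ 2 * N)) tendsto_id))).sub_const
      (log 2 ^ 2 / 2)
    rw [show log 2 * eulerMascheroniConstant + c - c - log 2 ^ 2 / 2
      = log 2 * (eulerMascheroniConstant - log 2 / 2) by ring] at h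
    refine h.congr' ?_
    filter_upwards [eventually_ne_atTop 0] with N hN
    rw [Function.comp_apply, sum_Icc_two_mul_neg_one_pow_mul_log_div, Nat.cast_mul,
      Nat.cast_two, log_mul two_ne_zero (Nat.cast_ne_zero.2 hN)]
    ring
  have h_odd := h_even.sub (tendsto_log_natCast_div_natCast.comp
    (tendsto_atTop_mono (fun N => (by omega : N ≤ 2 * N + 1)) tendsto_id))
  rw [sub_zero] at h_odd
  refine tendsto_of_tendsto_two_mul_of_tendsto_two_mul_add_one h_even (h_odd.congr fun N => ?_)
  rw [Function.comp_apply, sum_Icc_succ_top (by omega), pow_succ, pow_mul]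
  push_cast
  ring
end

section
/- Raabe's formula: for every real x ≥ 0, ∫_x^{x+1} log Γ(z) dz = (1/2) log(2π) + x log x − x, where for x = 0 the term x log x is interpreted as 0; in particular ∫_0^1 log Γ(z) dz = (1/2) log(2π). -/
/-!
Write `F x = ∫ z in x..x+1, log Γ z`. Shifting the variable gives
`F x - F 0 = ∫ t in 0..x, (log Γ (t + 1) - log Γ t) = ∫ t in 0..x, log t = x log x - x`,
by `Γ (t + 1) = t Γ t`. For `F 0`, integrate Legendre's duplication formula in the form
`log Γ z + log Γ (z + 1/2) = log Γ (2z) + (1 - 2z) log 2 + (log π)/2` over `[0, 1/2]`: the left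
side gives `F 0`, the right side `F 0 / 2 + log (2π) / 4`.
-/

open Real MeasureTheory Set

theorem intervalIntegral.integral_translate_eq_add_integral_sub {E : Type*}
    [NormedAddCommGroup E] [NormedSpace ℝ E] {f : ℝ → E}
    (hf : ∀ u v, IntervalIntegrable f volume u v) (a b c : ℝ) :
    ∫ t in b..b + c, f t = (∫ t in a..a + c, f t) + ∫ t in a..b, (f (t + c) - f t) := by
  have hshift : IntervalIntegrable (fun t => f (t + c)) volume a b := by
    simpa using (hf (a + c) (b + c)).comp_add_right c
  rw [intervalIntegral.integral_sub hshift (hf a b), intervalIntegral.integral_comp_add_right,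
    intervalIntegral.integral_interval_sub_interval_comm' (hf _ _) (hf _ _) (hf _ _)]
  abel

namespace Real

theorem meromorphic_Gamma : Meromorphic Gamma := by
  have hinv : ∀ t : ℝ, AnalyticAt ℝ (fun s : ℝ => ((Complex.Gamma s)⁻¹).re) t := fun t =>
    Complex.reCLM.analyticAt _ |>.comp <|
      ((Complex.differentiable_one_div_Gamma.analyticAt _).restrictScalars (𝕜 := ℝ)).comp
        (Complex.ofRealCLM.analyticAt t)
  have hGamma : Gamma = (fun s : ℝ => ((Complex.Gamma s)⁻¹).re)⁻¹ := by
    ext s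
    simp [Complex.Gamma_ofReal, ← Complex.ofReal_inv]
  rw [hGamma]
  exact fun t => (hinv t).meromorphicAt.inv

theorem intervalIntegrable_log_Gamma (a b : ℝ) :
    IntervalIntegrable (fun t => log (Gamma t)) volume a b :=
  MeromorphicOn.intervalIntegrable_log meromorphic_Gamma.meromorphicOn

theorem ae_Gamma_ne_zero : ∀ᵐ t : ℝ, Gamma t ≠ 0 := by
  refine measure_mono_null (fun t (ht : ¬Gamma t ≠ 0) => ?_)
    ((countable_range fun n : ℕ => -(n : ℝ)).measure_zero volume)
  by_contra hpole
  exact ht (Gamma_ne_zero fun n hn => hpole ⟨n, hn.symm⟩)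

theorem log_Gamma_add_one {t : ℝ} (ht : Gamma t ≠ 0) :
    log (Gamma (t + 1)) = log t + log (Gamma t) := by
  have ht0 : t ≠ 0 := by
    rintro rfl
    exact ht Gamma_zero
  rw [Gamma_add_one ht0, log_mul ht0 ht]

theorem integral_log_Gamma_add_one_sub (a b : ℝ) :
    ∫ t in a..b, (log (Gamma (t + 1)) - log (Gamma t)) = b * log b - a * log a - b + a := by
  rw [← integral_log]
  refine intervalIntegral.integral_congr_ae ?_
  filter_upwards [ae_Gamma_ne_zero] with t ht _
  rw [log_Gamma_add_one ht, add_sub_cancel_right]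

theorem log_Gamma_add_log_Gamma_add_half {z : ℝ} (hz : 0 < z) :
    log (Gamma z) + log (Gamma (z + 1 / 2)) =
      log (Gamma (2 * z)) + ((1 - 2 * z) * log 2 + log π / 2) := by
  have h := congrArg log (Gamma_mul_Gamma_add_half z)
  rw [log_mul (Gamma_pos_of_pos hz).ne' (Gamma_pos_of_pos (by linarith)).ne',
    log_mul (by positivity) (sqrt_pos.mpr pi_pos).ne',
    log_mul (Gamma_pos_of_pos (by linarith)).ne' (by positivity), log_rpow two_pos,
    log_sqrt pi_pos.le] at h
  linarith

theorem integral_log_Gamma_zero_one :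
    ∫ z in (0 : ℝ)..1, log (Gamma z) = log (2 * π) / 2 := by
  set I := ∫ z in (0 : ℝ)..1, log (Gamma z)
  have hshift : IntervalIntegrable (fun z => log (Gamma (z + 1 / 2))) volume 0 (1 / 2) :=
    (IntervalIntegrable.comp_add_right_iff).mpr (intervalIntegrable_log_Gamma _ _)
  have hscale : IntervalIntegrable (fun z => log (Gamma (2 * z))) volume 0 (1 / 2) := by
    simpa using (intervalIntegrable_log_Gamma 0 1).comp_mul_left (c := 2)
  have hsum : ∫ z in (0 : ℝ)..1 / 2, (log (Gamma z) + log (Gamma (z + 1 / 2))) = I := by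
    rw [intervalIntegral.integral_add (intervalIntegrable_log_Gamma _ _) hshift,
      intervalIntegral.integral_comp_add_right (fun z => log (Gamma z)), zero_add,
      intervalIntegral.integral_add_adjacent_intervals (intervalIntegrable_log_Gamma _ _)
        (intervalIntegrable_log_Gamma _ _), add_halves]
  have hdouble : ∫ z in (0 : ℝ)..1 / 2, log (Gamma (2 * z)) = I / 2 := by
    rw [intervalIntegral.integral_comp_mul_left (fun z => log (Gamma z)) two_ne_zero]
    norm_num
    ring
  have hlinear : ∫ z in (0 : ℝ)..1 / 2, ((1 - 2 * z) * log 2 + log π / 2) =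
      log 2 / 4 + log π / 4 := by
    rw [intervalIntegral.integral_add ((by fun_prop : Continuous fun z : ℝ =>
      (1 - 2 * z) * log 2).intervalIntegrable _ _) intervalIntegrable_const,
      intervalIntegral.integral_comp_sub_mul (fun u => u * log 2) two_ne_zero,
      intervalIntegral.integral_mul_const]
    norm_num
    ring
  have hdup : I = I / 2 + (log 2 / 4 + log π / 4) := calc
    I = ∫ z in (0 : ℝ)..1 / 2, (log (Gamma z) + log (Gamma (z + 1 / 2))) := hsum.symm
    _ = ∫ z in (0 : ℝ)..1 / 2, (log (Gamma (2 * z)) + ((1 - 2 * z) * log 2 + log π / 2)) := by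
      refine intervalIntegral.integral_congr_ae (Filter.Eventually.of_forall fun z hz => ?_)
      rw [uIoc_of_le (by norm_num)] at hz
      exact log_Gamma_add_log_Gamma_add_half hz.1
    _ = I / 2 + (log 2 / 4 + log π / 4) := by
      rw [intervalIntegral.integral_add hscale ((by fun_prop : Continuous fun z : ℝ =>
        (1 - 2 * z) * log 2 + log π / 2).intervalIntegrable _ _), hdouble, hlinear]
  rw [log_mul two_ne_zero pi_ne_zero]
  linarith

end Real

theorem raabe_integral_log_Gamma_general (x : ℝ) :
    ∫ z in x..(x + 1), Real.log (Real.Gamma z) =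
      (1 / 2) * Real.log (2 * Real.pi) + x * Real.log x - x := by
  rw [intervalIntegral.integral_translate_eq_add_integral_sub intervalIntegrable_log_Gamma 0,
    zero_add, integral_log_Gamma_zero_one, integral_log_Gamma_add_one_sub]
  ring

/-- Raabe's formula: for every real `x ≥ 0`,
`∫_x^{x+1} log Γ(z) dz = (1/2) log(2π) + x log x − x`
(for `x = 0` the term `x log x` is `0`, which holds automatically here since
`Real.log 0 = 0`). -/
theorem raabe_integral_log_Gamma (x : ℝ) (hx : 0 ≤ x) :
    ∫ z in x..(x + 1), Real.log (Real.Gamma z) =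
      (1 / 2) * Real.log (2 * Real.pi) + x * Real.log x - x :=
  raabe_integral_log_Gamma_general x
end

section
/- The alternating series ∑_{k=2}^∞ (−1)^k ζ(k)/(k+1) converges to 1 + γ/2 − (1/2) log(2π), in the sense that the partial sums ∑_{k=2}^N (−1)^k ζ(k)/(k+1) tend to 1 + γ/2 − (1/2) log(2π) as N → ∞. -/
/-!
Write `ζ(k) = ∑ₙ xₙ ^ k` with `xₙ = 1 / (n + 1)` and exchange the two sums: the `N`-th
partial sum becomes `∑ₙ T_N(xₙ)`, where `T_N(x) = ∑_{k=2}^N (-1)^k x^k / (k + 1)` truncates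
the tail `T(x) = log (1 + x) / x - 1 + x / 2` of the power series of `log (1 + x) / x`.
For `n ≥ 1` we have `xₙ ≤ 1 / 2` and `|T_N(xₙ)| ≤ 2 xₙ²`, so Tannery's theorem lets `N → ∞`
under the sum over `n`; the term `n = 0` is the alternating harmonic series, whose sum `log 2`
follows from the Leibniz test and Abel's limit theorem. Finally `∑_{n<M} T(xₙ)` telescopes to
`(M + 1) log (M + 1) - log (M + 1)! - M + H_M / 2`, and Stirling's formula together with
`H_M - log (M + 1) → γ` gives the value.
-/

open Filter Finset Real Topology

theorem hasSum_neg_one_pow_mul_pow_div_succ {x : ℝ} (hx : |x| < 1) (hx0 : x ≠ 0) :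
    HasSum (fun k : ℕ => (-1) ^ k * x ^ k / (k + 1)) (log (1 + x) / x) := by
  have h := ((hasSum_pow_div_log_of_abs_lt_one (x := -x) (by rwa [abs_neg])).neg).div_const x
  rw [sub_neg_eq_add, neg_neg] at h
  refine h.congr_fun fun k => ?_
  rw [neg_pow, pow_succ]
  field_simp
  ring

theorem tendsto_sum_range_neg_one_pow_div_succ :
    Tendsto (fun n : ℕ => ∑ i ∈ range n, (-1 : ℝ) ^ i / (i + 1)) atTop (𝓝 (log 2)) := by
  obtain ⟨l, hl⟩ := Antitone.tendsto_alternating_series_of_tendsto_zero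
    (fun i j hij => by gcongr) (tendsto_one_div_add_atTop_nhds_zero_nat (𝕜 := ℝ))
  have abel := Real.tendsto_tsum_powerSeries_nhdsWithin_lt hl
  have hlog : Tendsto (fun x : ℝ => log (1 + x) / x) (𝓝[<] 1) (𝓝 (log 2)) := by
    have : ContinuousAt (fun x : ℝ => log (1 + x) / x) 1 := by
      fun_prop (disch := norm_num)
    simpa [one_add_one_eq_two] using this.tendsto.mono_left nhdsWithin_le_nhds
  have hl2 : l = log 2 := by
    refine tendsto_nhds_unique (abel.congr' ?_) hlog
    filter_upwards [Ioo_mem_nhdsLT (zero_lt_one' ℝ)] with x hx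
    have hx' : |x| < 1 := abs_lt.2 ⟨by linarith [hx.1], hx.2⟩
    rw [← (hasSum_neg_one_pow_mul_pow_div_succ hx' hx.1.ne').tsum_eq]
    congr 1 with k
    ring
  simpa only [hl2, mul_one_div] using hl

theorem tendsto_sum_range_neg_one_pow_mul_pow_div_succ {x : ℝ} (hx0 : 0 < x) (hx1 : x ≤ 1) :
    Tendsto (fun n : ℕ => ∑ k ∈ range n, (-1) ^ k * x ^ k / (k + 1)) atTop
      (𝓝 (log (1 + x) / x)) := by
  rcases hx1.lt_or_eq with hx1 | rfl
  · exact (hasSum_neg_one_pow_mul_pow_div_succ (abs_lt.2 ⟨by linarith, hx1⟩)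
      hx0.ne').tendsto_sum_nat
  · simpa [one_add_one_eq_two] using tendsto_sum_range_neg_one_pow_div_succ

theorem tendsto_sum_Icc_two_of_tendsto_sum_range {G : Type*} [AddCommGroup G] [TopologicalSpace G]
    [IsTopologicalAddGroup G] {f : ℕ → G} {a : G}
    (h : Tendsto (fun n => ∑ i ∈ range n, f i) atTop (𝓝 a)) :
    Tendsto (fun N => ∑ k ∈ Icc 2 N, f k) atTop (𝓝 (a - f 0 - f 1)) := by
  rw [sub_sub]
  refine ((h.comp (tendsto_add_atTop_nat 1)).sub_const (f 0 + f 1)).congr' ?_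
  filter_upwards [eventually_ge_atTop 1] with N hN
  simp only [Function.comp_apply, ← Finset.Ico_add_one_right_eq_Icc]
  rw [Finset.sum_Ico_eq_sub _ (by omega)]
  simp [Finset.sum_range_succ]

noncomputable def logSeriesTail (x : ℝ) : ℝ := log (1 + x) / x - 1 + x / 2

noncomputable def logSeriesTailPartial (N : ℕ) (x : ℝ) : ℝ :=
  ∑ k ∈ Icc 2 N, (-1) ^ k * x ^ k / (k + 1)

theorem tendsto_logSeriesTailPartial {x : ℝ} (hx0 : 0 < x) (hx1 : x ≤ 1) :
    Tendsto (logSeriesTailPartial · x) atTop (𝓝 (logSeriesTail x)) := by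
  have h := tendsto_sum_Icc_two_of_tendsto_sum_range
    (tendsto_sum_range_neg_one_pow_mul_pow_div_succ hx0 hx1)
  convert h using 2
  · rfl
  · norm_num [logSeriesTail]
    ring

theorem abs_logSeriesTailPartial_le {x : ℝ} (hx0 : 0 ≤ x) (hx : x ≤ 1 / 2) (N : ℕ) :
    |logSeriesTailPartial N x| ≤ 2 * x ^ 2 := by
  calc |logSeriesTailPartial N x| ≤ ∑ k ∈ Ico 2 (N + 1), x ^ k := by
        rw [logSeriesTailPartial, Finset.Ico_add_one_right_eq_Icc]
        refine (abs_sum_le_sum_abs _ _).trans (sum_le_sum fun k _ => ?_)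
        rw [abs_div, abs_mul, abs_neg_one_pow, one_mul, abs_of_nonneg (pow_nonneg hx0 k)]
        exact div_le_self (by positivity) (by rw [abs_of_nonneg (by positivity)]; linarith)
    _ ≤ x ^ 2 / (1 - x) := geom_sum_Ico_le_of_lt_one hx0 (by linarith)
    _ ≤ 2 * x ^ 2 := by
        rw [div_le_iff₀ (by linarith)]
        nlinarith [sq_nonneg x]

theorem abs_logSeriesTail_le {x : ℝ} (hx0 : 0 < x) (hx : x ≤ 1 / 2) :
    |logSeriesTail x| ≤ 2 * x ^ 2 :=
  le_of_tendsto' (tendsto_logSeriesTailPartial hx0 (by linarith)).abs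
    (abs_logSeriesTailPartial_le hx0.le hx)

theorem zetaReal_natCast (k : ℕ) : zetaReal k = ∑' n : ℕ, (1 / ((n : ℝ) + 1)) ^ k := by
  simp_rw [zetaReal, Real.rpow_natCast, one_div, inv_pow]

theorem summable_one_div_nat_add_one_pow {k : ℕ} (hk : 2 ≤ k) :
    Summable (fun n : ℕ => (1 / ((n : ℝ) + 1)) ^ k) := by
  have h := (summable_nat_add_iff 1).mpr (Real.summable_one_div_nat_pow.mpr hk)
  simpa [div_pow] using h

theorem one_div_nat_succ_add_one_le_half (n : ℕ) : 1 / (((n + 1 : ℕ) : ℝ) + 1) ≤ 1 / 2 := by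
  gcongr
  push_cast
  linarith [n.cast_nonneg (α := ℝ)]

theorem hasSum_logSeriesTailPartial_one_div_nat_add_one (N : ℕ) :
    HasSum (fun n : ℕ => logSeriesTailPartial N (1 / ((n : ℝ) + 1)))
      (∑ k ∈ Icc 2 N, (-1) ^ k * zetaReal k / ((k : ℝ) + 1)) := by
  refine hasSum_sum fun k hk => ?_
  rw [zetaReal_natCast]
  exact (((summable_one_div_nat_add_one_pow (mem_Icc.mp hk).1).hasSum).mul_left _).div_const _

theorem logSeriesTail_one_div_nat_add_one (n : ℕ) :
    logSeriesTail (1 / ((n : ℝ) + 1))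
      = (n + 1) * (log (n + 2) - log (n + 1)) - 1 + 1 / (2 * (n + 1)) := by
  have h1 : (1 : ℝ) + 1 / ((n : ℝ) + 1) = (n + 2) / (n + 1) := by field_simp; ring
  rw [logSeriesTail, h1, log_div (by positivity) (by positivity)]
  field_simp

theorem sum_range_logSeriesTail (M : ℕ) :
    ∑ n ∈ range M, logSeriesTail (1 / ((n : ℝ) + 1))
      = (M + 1) * log (M + 1) - log (M + 1).factorial - M + harmonic M / 2 := by
  induction M with
  | zero => simp
  | succ M ih =>
    rw [sum_range_succ, ih, logSeriesTail_one_div_nat_add_one, Nat.factorial_succ (M + 1),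
      harmonic_succ]
    push_cast
    rw [log_mul (by positivity) (by positivity)]
    field_simp
    ring_nf

theorem sum_range_logSeriesTail_eq_stirlingSeq (M : ℕ) :
    ∑ n ∈ range M, logSeriesTail (1 / ((n : ℝ) + 1))
      = 1 - log 2 / 2 - log (Stirling.stirlingSeq (M + 1)) + (harmonic M - log (M + 1)) / 2 := by
  have h := Stirling.log_stirlingSeq_formula (M + 1)
  push_cast at h
  rw [log_mul two_ne_zero (by positivity), log_div (by positivity) (exp_ne_zero 1), log_exp] at h
  rw [sum_range_logSeriesTail, h]
  linarith

theorem tendsto_sum_range_logSeriesTail_one_div_nat_add_one :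
    Tendsto (fun M => ∑ n ∈ range M, logSeriesTail (1 / ((n : ℝ) + 1))) atTop
      (𝓝 (1 + eulerMascheroniConstant / 2 - 1 / 2 * log (2 * π))) := by
  have hstirling := (Stirling.tendsto_stirlingSeq_sqrt_pi.log (by positivity)).comp
    (tendsto_add_atTop_nat 1)
  have h := (hstirling.const_sub (1 - log 2 / 2)).add
    (Real.tendsto_harmonic_sub_log_add_one.div_const 2)
  convert h using 2 with M
  · exact sum_range_logSeriesTail_eq_stirlingSeq M
  rw [log_sqrt pi_pos.le, log_mul two_ne_zero pi_ne_zero]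
  ring

theorem summable_two_mul_one_div_nat_succ_add_one_sq :
    Summable (fun n : ℕ => 2 * (1 / (((n + 1 : ℕ) : ℝ) + 1)) ^ 2) :=
  ((summable_nat_add_iff 1).mpr (summable_one_div_nat_add_one_pow le_rfl)).mul_left 2

theorem hasSum_logSeriesTail_one_div_nat_add_one :
    HasSum (fun n : ℕ => logSeriesTail (1 / ((n : ℝ) + 1)))
      (1 + eulerMascheroniConstant / 2 - 1 / 2 * log (2 * π)) := by
  have hs : Summable (fun n : ℕ => logSeriesTail (1 / ((n : ℝ) + 1))) :=
    (summable_nat_add_iff 1).mp <| summable_two_mul_one_div_nat_succ_add_one_sq.of_norm_bounded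
      fun n => abs_logSeriesTail_le (by positivity) (one_div_nat_succ_add_one_le_half n)
  exact hs.hasSum_iff_tendsto_nat.mpr tendsto_sum_range_logSeriesTail_one_div_nat_add_one

theorem tendsto_tsum_logSeriesTailPartial_one_div_nat_succ_add_one :
    Tendsto (fun N => ∑' n : ℕ, logSeriesTailPartial N (1 / (((n + 1 : ℕ) : ℝ) + 1))) atTop
      (𝓝 (∑' n : ℕ, logSeriesTail (1 / (((n + 1 : ℕ) : ℝ) + 1)))) :=
  tendsto_tsum_of_dominated_convergence summable_two_mul_one_div_nat_succ_add_one_sq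
    (fun n => tendsto_logSeriesTailPartial (by positivity)
      ((one_div_nat_succ_add_one_le_half n).trans (by norm_num)))
    (Eventually.of_forall fun N n =>
      abs_logSeriesTailPartial_le (by positivity) (one_div_nat_succ_add_one_le_half n) N)

/-- The partial sums `∑_{k=2}^N (−1)^k ζ(k)/(k+1)` tend to `1 + γ/2 − (1/2) log(2π)`. -/
theorem tendsto_sum_neg_one_pow_zeta_div_succ :
    Filter.Tendsto
      (fun N : ℕ => ∑ k ∈ Finset.Icc 2 N, (-1 : ℝ) ^ k * zetaReal k / ((k : ℝ) + 1))
      Filter.atTop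
      (nhds (1 + Real.eulerMascheroniConstant / 2 - (1 / 2) * Real.log (2 * Real.pi))) := by
  rw [← hasSum_logSeriesTail_one_div_nat_add_one.tsum_eq,
    hasSum_logSeriesTail_one_div_nat_add_one.summable.tsum_eq_zero_add, Nat.cast_zero, zero_add,
    div_one]
  refine ((tendsto_logSeriesTailPartial one_pos le_rfl).add
    tendsto_tsum_logSeriesTailPartial_one_div_nat_succ_add_one).congr fun N => ?_
  rw [← (hasSum_logSeriesTailPartial_one_div_nat_add_one N).tsum_eq,
    (hasSum_logSeriesTailPartial_one_div_nat_add_one N).summable.tsum_eq_zero_add, Nat.cast_zero,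
    zero_add, div_one]
end

section
/- Kummer's integral: for every real x with 0 < x < 1, ∫_0^1 (t^{x−1} − t^{−x}) / ((1+t) · log t) dt = log tan(πx/2). -/
open Real MeasureTheory Set intervalIntegral
open scoped Interval

/-!
Both sides vanish at `x = 1/2` (the integrand is then `0`, and `tan (π / 4) = 1`), so it suffices
that their derivatives agree on `(0, 1)`. Differentiating under the integral sign removes the
`log t` and leaves `∫₀¹ (t^(x-1) + t^(-x)) / (1 + t) dt`. The substitution `t = y / (1 + y)` turns
the two summands into the two halves `[0, 1/2]` and `[1/2, 1]` of the Beta integral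
`B(x, 1 - x) = Γ(x) Γ(1 - x) = π / sin (π x)` (the second half via the symmetry `t ↦ 1 - t`,
`x ↦ 1 - x`), and `π / sin (π x)` is also the derivative of `log tan (π x / 2)`.
-/

namespace Kummer

noncomputable def betaIntegrand (u t : ℝ) : ℝ := t ^ (u - 1) * (1 - t) ^ (-u)

theorem integral_betaIntegrand {u : ℝ} (h0 : 0 < u) (h1 : u < 1) :
    ∫ t in (0:ℝ)..1, betaIntegrand u t = π / sin (π * u) := by
  have hbeta := Complex.Gamma_mul_Gamma_eq_betaIntegral (s := u) (t := 1 - u)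
    (by simpa using h0) (by simpa using h1)
  rw [add_sub_cancel, Complex.Gamma_one, one_mul, ← Complex.ofReal_one, ← Complex.ofReal_sub,
    Complex.Gamma_ofReal, Complex.Gamma_ofReal, ← Complex.ofReal_mul,
    Real.Gamma_mul_Gamma_one_sub, Complex.betaIntegral] at hbeta
  apply Complex.ofReal_injective
  rw [hbeta, ← integral_ofReal]
  refine integral_congr fun t ht => ?_
  rw [uIcc_of_le zero_le_one] at ht
  rw [betaIntegrand, Complex.ofReal_mul, Complex.ofReal_cpow ht.1,
    Complex.ofReal_cpow (sub_nonneg.2 ht.2)]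
  push_cast
  ring_nf

theorem integral_betaIntegrand_zero_half (u : ℝ) :
    ∫ t in (0:ℝ)..(1/2), betaIntegrand u t = ∫ y in (0:ℝ)..1, y ^ (u - 1) / (1 + y) := by
  have hderiv : ∀ y ∈ Ioo (min 0 1) (max 0 1),
      HasDerivAt (fun y : ℝ => y / (1 + y)) ((1 + y) ^ 2)⁻¹ y := by
    intro y hy
    rw [min_eq_left zero_le_one] at hy
    have hy : 1 + y ≠ 0 := by linarith [hy.1]
    refine ((hasDerivAt_id' y).fun_div ((hasDerivAt_id' y).const_add 1) hy).congr_deriv ?_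
    field_simp
    ring
  have hcont : ContinuousOn (fun y : ℝ => y / (1 + y)) (uIcc 0 1) :=
    continuousOn_id.div (continuousOn_const.add continuousOn_id) fun y hy => by
      rw [uIcc_of_le zero_le_one] at hy
      linarith [hy.1]
  have hsubst := integral_comp_mul_deriv_of_deriv_nonneg hcont hderiv (fun y _ => by positivity)
    (g := betaIntegrand u)
  norm_num at hsubst
  rw [← hsubst]
  refine integral_congr fun y hy => ?_
  rw [uIcc_of_le zero_le_one] at hy
  have hy : 0 ≤ y := hy.1
  have hp : 0 < 1 + y := by linarith
  simp only [betaIntegrand]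
  rw [show 1 - y / (1 + y) = (1 + y)⁻¹ by field_simp; ring, div_rpow hy hp.le, inv_rpow hp.le,
    ← rpow_neg hp.le, neg_neg, rpow_sub_one hp.ne' u]
  field_simp

theorem betaIntegrand_one_sub (u t : ℝ) : betaIntegrand u (1 - t) = betaIntegrand (1 - u) t := by
  simp only [betaIntegrand, sub_sub_cancel, sub_sub_cancel_left, neg_sub, mul_comm]

theorem integral_betaIntegrand_half_one (u : ℝ) :
    ∫ t in (1/2:ℝ)..1, betaIntegrand u t = ∫ t in (0:ℝ)..(1/2), betaIntegrand (1 - u) t := by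
  have h := integral_comp_sub_left (betaIntegrand u) (a := 0) (b := 1/2) 1
  norm_num [betaIntegrand_one_sub] at h
  exact h.symm

theorem intervalIntegrable_betaIntegrand_zero_half {u : ℝ} (hu : 0 < u) :
    IntervalIntegrable (betaIntegrand u) volume 0 (1/2) := by
  refine (intervalIntegrable_rpow' (by linarith)).mul_continuousOn ?_
  refine ContinuousOn.rpow_const (by fun_prop) fun t ht => Or.inl ?_
  rw [uIcc_of_le (by norm_num)] at ht
  linarith [ht.2]

theorem intervalIntegrable_betaIntegrand_half_one {u : ℝ} (hu : u < 1) :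
    IntervalIntegrable (betaIntegrand u) volume (1/2) 1 := by
  have h := (intervalIntegrable_betaIntegrand_zero_half (u := 1 - u) (by linarith)).comp_sub_left 1
  norm_num [betaIntegrand_one_sub] at h
  exact h.symm

theorem integral_rpow_div_one_add_add_integral_rpow_neg_div_one_add {u : ℝ} (h0 : 0 < u)
    (h1 : u < 1) :
    (∫ y in (0:ℝ)..1, y ^ (u - 1) / (1 + y)) + (∫ y in (0:ℝ)..1, y ^ (-u) / (1 + y)) =
      π / sin (π * u) := by
  calc (∫ y in (0:ℝ)..1, y ^ (u - 1) / (1 + y)) + (∫ y in (0:ℝ)..1, y ^ (-u) / (1 + y))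
      = (∫ t in (0:ℝ)..(1/2), betaIntegrand u t) + ∫ t in (1/2:ℝ)..1, betaIntegrand u t := by
        rw [integral_betaIntegrand_half_one, integral_betaIntegrand_zero_half,
          integral_betaIntegrand_zero_half, sub_sub_cancel_left]
    _ = ∫ t in (0:ℝ)..1, betaIntegrand u t :=
        integral_add_adjacent_intervals (intervalIntegrable_betaIntegrand_zero_half h0)
          (intervalIntegrable_betaIntegrand_half_one h1)
    _ = π / sin (π * u) := integral_betaIntegrand h0 h1

theorem intervalIntegrable_rpow_div_one_add {p : ℝ} (hp : -1 < p) :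
    IntervalIntegrable (fun y : ℝ => y ^ p / (1 + y)) volume 0 1 := by
  simp only [div_eq_mul_inv]
  refine (intervalIntegrable_rpow' hp).mul_continuousOn (ContinuousOn.inv₀ (by fun_prop) ?_)
  intro y hy
  rw [uIcc_of_le zero_le_one] at hy
  linarith [hy.1]

noncomputable def kernel (x t : ℝ) : ℝ := (t ^ (x - 1) - t ^ (-x)) / ((1 + t) * log t)

noncomputable def kernelDeriv (x t : ℝ) : ℝ := (t ^ (x - 1) + t ^ (-x)) / (1 + t)

theorem hasDerivAt_kernel {t : ℝ} (ht0 : 0 < t) (ht1 : t ≠ 1) (x : ℝ) :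
    HasDerivAt (kernel · t) (kernelDeriv x t) x := by
  have hlog : log t ≠ 0 := log_ne_zero_of_pos_of_ne_one ht0 ht1
  have h1 := ((hasDerivAt_id' x).sub_const 1).const_rpow ht0
  have h2 := (hasDerivAt_neg' x).const_rpow ht0
  refine ((h1.sub h2).div_const ((1 + t) * log t)).congr_deriv ?_
  simp only [kernelDeriv]
  field_simp
  ring

theorem norm_kernelDeriv_le {a b x t : ℝ} (hx : x ∈ Icc a b) (ht : t ∈ Ioc 0 1) :
    ‖kernelDeriv x t‖ ≤ t ^ (a - 1) + t ^ (-b) := by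
  have hnum : 0 ≤ t ^ (x - 1) + t ^ (-x) := by positivity [ht.1.le]
  rw [kernelDeriv, norm_of_nonneg (div_nonneg hnum (by linarith [ht.1]))]
  calc (t ^ (x - 1) + t ^ (-x)) / (1 + t) ≤ t ^ (x - 1) + t ^ (-x) :=
        div_le_self hnum (by linarith [ht.1])
    _ ≤ t ^ (a - 1) + t ^ (-b) :=
        add_le_add (rpow_le_rpow_of_exponent_ge ht.1 ht.2 (by linarith [hx.1]))
          (rpow_le_rpow_of_exponent_ge ht.1 ht.2 (by linarith [hx.2]))

theorem kernel_half (t : ℝ) : kernel (1/2) t = 0 := by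
  norm_num [kernel]

theorem norm_kernel_le {a b x t : ℝ} (hx : x ∈ Icc a b) (hhalf : 1/2 ∈ Icc a b)
    (ht : t ∈ Ioo 0 1) : ‖kernel x t‖ ≤ (t ^ (a - 1) + t ^ (-b)) * ‖x - 1/2‖ := by
  have h := (convex_Icc a b).norm_image_sub_le_of_norm_hasDerivWithin_le (f := (kernel · t))
    (fun y _ => (hasDerivAt_kernel ht.1 ht.2.ne y).hasDerivWithinAt)
    (fun y hy => norm_kernelDeriv_le hy (Ioo_subset_Ioc_self ht)) hhalf hx
  rwa [kernel_half, sub_zero] at h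

theorem measurable_kernel (x : ℝ) : Measurable (kernel x) := by
  unfold kernel; fun_prop

theorem measurable_kernelDeriv (x : ℝ) : Measurable (kernelDeriv x) := by
  unfold kernelDeriv; fun_prop

theorem hasDerivAt_integral_kernel_of_mem_Ioo {a b x : ℝ} (ha : 0 < a) (hb : b < 1)
    (hx : x ∈ Ioo a b) (hhalf : 1/2 ∈ Icc a b) :
    HasDerivAt (fun y => ∫ t in (0:ℝ)..1, kernel y t) (∫ t in (0:ℝ)..1, kernelDeriv x t) x := by
  have hbound : IntervalIntegrable (fun t : ℝ => t ^ (a - 1) + t ^ (-b)) volume 0 1 :=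
    (intervalIntegrable_rpow' (by linarith)).add (intervalIntegrable_rpow' (by linarith))
  -- At `t = 1` the kernel is `0` (Lean's `x / 0 = 0` with `log 1 = 0`), so it has derivative `0`,
  -- not `kernelDeriv x 1 = 1`.
  have hIoo : ∀ᵐ t, t ∈ Ι (0:ℝ) 1 → t ∈ Ioo 0 1 := by
    filter_upwards [Measure.ae_ne volume 1] with t ht1 ht
    rw [uIoc_of_le zero_le_one] at ht
    exact ⟨ht.1, lt_of_le_of_ne ht.2 ht1⟩
  have hint : IntervalIntegrable (kernel x) volume 0 1 := by
    refine (hbound.mul_const ‖x - 1/2‖).mono_fun' (measurable_kernel x).aestronglyMeasurable ?_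
    refine (ae_restrict_iff' measurableSet_uIoc).2 ?_
    filter_upwards [hIoo] with t ht hΙ
    exact norm_kernel_le (Ioo_subset_Icc_self hx) hhalf (ht hΙ)
  refine (intervalIntegral.hasDerivAt_integral_of_dominated_loc_of_deriv_le
    (isOpen_Ioo.mem_nhds hx) (.of_forall fun y => (measurable_kernel y).aestronglyMeasurable) hint
    (measurable_kernelDeriv x).aestronglyMeasurable ?_ hbound ?_).2
  · filter_upwards [hIoo] with t ht hΙ y hy
    exact norm_kernelDeriv_le (Ioo_subset_Icc_self hy) (Ioo_subset_Ioc_self (ht hΙ))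
  · filter_upwards [hIoo] with t ht hΙ y _
    exact hasDerivAt_kernel (ht hΙ).1 (ht hΙ).2.ne y

theorem integral_kernelDeriv {x : ℝ} (h0 : 0 < x) (h1 : x < 1) :
    ∫ t in (0:ℝ)..1, kernelDeriv x t = π / sin (π * x) := by
  rw [← integral_rpow_div_one_add_add_integral_rpow_neg_div_one_add h0 h1,
    ← integral_add (intervalIntegrable_rpow_div_one_add (by linarith))
      (intervalIntegrable_rpow_div_one_add (by linarith))]
  simp only [kernelDeriv, add_div]

theorem hasDerivAt_integral_kernel {x : ℝ} (hx : x ∈ Ioo 0 1) :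
    HasDerivAt (fun y => ∫ t in (0:ℝ)..1, kernel y t) (π / sin (π * x)) x := by
  have hmin : 0 < min x (1/2) := lt_min hx.1 (by norm_num)
  have hmax : max x (1/2) < 1 := max_lt hx.2 (by norm_num)
  rw [← integral_kernelDeriv hx.1 hx.2]
  refine hasDerivAt_integral_kernel_of_mem_Ioo (a := min x (1/2) / 2)
    (b := (max x (1/2) + 1) / 2) (by positivity) (by linarith) ⟨?_, ?_⟩ ⟨?_, ?_⟩
  · linarith [min_le_left x (1/2)]
  · linarith [le_max_left x (1/2)]
  · linarith [min_le_right x (1/2)]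
  · linarith [le_max_right x (1/2)]

theorem hasDerivAt_log_tan {x : ℝ} (hx : x ∈ Ioo 0 1) :
    HasDerivAt (fun y => log (tan (π * y / 2))) (π / sin (π * x)) x := by
  have hθ0 : 0 < π * x / 2 := by have := hx.1; positivity
  have hθ1 : π * x / 2 < π / 2 := by nlinarith [pi_pos, hx.2]
  have hcos : 0 < cos (π * x / 2) := cos_pos_of_mem_Ioo ⟨by linarith, hθ1⟩
  have hsin : 0 < sin (π * x / 2) := sin_pos_of_pos_of_lt_pi hθ0 (by linarith)
  have htan : HasDerivAt (fun y => tan (π * y / 2)) (1 / cos (π * x / 2) ^ 2 * (π / 2)) x :=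
    HasDerivAt.comp (h₂ := tan) x (hasDerivAt_tan hcos.ne')
      (by simpa using ((hasDerivAt_id' x).const_mul π).div_const 2)
  have hsin2 : sin (π * x) = 2 * sin (π * x / 2) * cos (π * x / 2) := by
    rw [← sin_two_mul]; ring_nf
  refine (htan.log (by rw [tan_eq_sin_div_cos]; positivity)).congr_deriv ?_
  rw [hsin2, tan_eq_sin_div_cos]
  field_simp

end Kummer

open Kummer in
/-- Kummer's integral: for `0 < x < 1`,
`∫_0^1 (t^{x−1} − t^{−x}) / ((1+t) log t) dt = log tan(πx/2)`. -/
theorem kummer_integral_eq_log_tan (x : ℝ) (hx0 : 0 < x) (hx1 : x < 1) :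
    ∫ t in (0:ℝ)..1, (t ^ (x - 1) - t ^ (-x)) / ((1 + t) * Real.log t) =
      Real.log (Real.tan (Real.pi * x / 2)) := by
  have hF := fun y (hy : y ∈ Ioo (0:ℝ) 1) => hasDerivAt_integral_kernel hy
  have hG := fun y (hy : y ∈ Ioo (0:ℝ) 1) => hasDerivAt_log_tan hy
  have hhalf : ∫ t in (0:ℝ)..1, kernel (1/2) t = log (tan (π * (1/2) / 2)) := by
    rw [show π * (1/2) / 2 = π / 4 by ring, tan_pi_div_four, log_one]
    simp only [kernel_half, intervalIntegral.integral_zero]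
  exact isOpen_Ioo.eqOn_of_deriv_eq isPreconnected_Ioo
    (fun y hy => (hF y hy).differentiableAt.differentiableWithinAt)
    (fun y hy => (hG y hy).differentiableAt.differentiableWithinAt)
    (fun y hy => (hF y hy).deriv.trans (hG y hy).deriv.symm) (by norm_num) hhalf ⟨hx0, hx1⟩
end

section
/- For every real x > 0, Γ(x) = lim_{n→∞} n^x ∑_{k=0}^n C(n,k) (−1)^k / (k + x). -/
/-!
Pascal's rule turns the alternating sum `S n x = ∑ₖ C(n,k) (-1)ᵏ / (k + x)` into a finite
difference, `S (n+1) x = S n x - S n (x+1)`, and `n! / (x (x+1) ⋯ (x+n))` satisfies the same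
recursion, so the two agree for all `n`. Hence `n^x S n x` is exactly Euler's sequence
`n^x n! / (x (x+1) ⋯ (x+n))`, whose limit is `Γ(x)`.
-/

open Finset Nat

variable {K : Type*} [Field K]

theorem sum_range_choose_succ_mul_neg_one_pow_div (n : ℕ) (x : K) :
    ∑ k ∈ range (n + 2), ((n + 1).choose k : K) * (-1) ^ k / (k + x) =
      ∑ k ∈ range (n + 1), (n.choose k : K) * (-1) ^ k / (k + x) -
        ∑ k ∈ range (n + 1), (n.choose k : K) * (-1) ^ k / (k + (x + 1)) := by
  simp only [mul_div_assoc]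
  rw [sum_choose_succ_mul (fun k _ => (-1) ^ k / ((k : K) + x)), sub_eq_add_neg,
    ← sum_neg_distrib]
  congr 1
  refine sum_congr rfl fun k _ => ?_
  push_cast
  ring

theorem prod_range_succ_add_eq_mul_prod_range_add_one (n : ℕ) (x : K) :
    ∏ j ∈ range (n + 1), (x + j) = x * ∏ j ∈ range n, (x + 1 + j) := by
  rw [prod_range_succ', mul_comm]
  push_cast
  simp only [add_zero, add_right_comm x, add_assoc]

theorem factorial_div_prod_sub_factorial_div_prod_add_one (n : ℕ) (x : K)
    (hx : ∀ j ≤ n + 1, x + j ≠ 0) :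
    (n ! : K) / ∏ j ∈ range (n + 1), (x + j) - n ! / ∏ j ∈ range (n + 1), (x + 1 + j) =
      (n + 1)! / ∏ j ∈ range (n + 2), (x + j) := by
  have hfull : ∏ j ∈ range (n + 2), (x + j) ≠ 0 :=
    prod_ne_zero_iff.2 fun j hj => hx j (by grind)
  have hinit : ∏ j ∈ range (n + 1), (x + j) ≠ 0 :=
    prod_ne_zero_iff.2 fun j hj => hx j (by grind)
  have hshift := prod_range_succ_add_eq_mul_prod_range_add_one (n + 1) x
  have hrel : (∏ j ∈ range (n + 1), (x + j)) * (x + (n + 1)) =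
      x * ∏ j ∈ range (n + 1), (x + 1 + j) := by
    rw [← hshift, prod_range_succ _ (n + 1), cast_add_one]
  rw [hshift] at hfull
  rw [hshift, div_sub_div _ _ hinit (right_ne_zero_of_mul hfull),
    div_eq_div_iff (mul_ne_zero hinit (right_ne_zero_of_mul hfull)) hfull, factorial_succ]
  push_cast
  linear_combination -(n ! : K) * (∏ j ∈ range (n + 1), (x + 1 + j)) * hrel

theorem sum_range_choose_mul_neg_one_pow_div_eq_factorial_div_prod (n : ℕ) {x : K}
    (hx : ∀ j ≤ n, x + j ≠ 0) :
    ∑ k ∈ range (n + 1), (n.choose k : K) * (-1) ^ k / (k + x) =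
      n ! / ∏ j ∈ range (n + 1), (x + j) := by
  induction n generalizing x with
  | zero => simp [add_comm]
  | succ n ih =>
    rw [sum_range_choose_succ_mul_neg_one_pow_div, ih fun j hj => hx j (by omega),
      ih fun j hj => by simpa [add_right_comm x, add_assoc] using hx (j + 1) (by omega),
      factorial_div_prod_sub_factorial_div_prod_add_one n x hx]

/-- For every real `x > 0`, `Γ(x) = lim_{n→∞} n^x ∑_{k=0}^n C(n,k) (−1)^k / (k + x)`. -/
theorem tendsto_rpow_mul_alternating_sum_gamma (x : ℝ) (hx : 0 < x) :
    Filter.Tendsto (fun n : ℕ =>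
        (n : ℝ) ^ x * ∑ k ∈ Finset.range (n + 1), (n.choose k : ℝ) * (-1) ^ k / ((k : ℝ) + x))
      Filter.atTop (nhds (Real.Gamma x)) := by
  refine (Real.GammaSeq_tendsto_Gamma x).congr fun n => ?_
  rw [sum_range_choose_mul_neg_one_pow_div_eq_factorial_div_prod n fun j _ => by positivity,
    Real.GammaSeq, mul_div_assoc]
end

section
/- The derivative of the Riemann zeta function at −1 satisfies ζ'(−1) = (1/12)(1 − γ − log(2π)) + ζ'(2)/(2π²). -/
open Complex Filter Topology
open scoped Real

/-!
Differentiate the functional equation `ζ(1 - s) = 2 (2π)^(-s) Γ(s) cos(πs/2) ζ(s)` at `s = 2`.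
There `cos(πs/2)` has a critical point, `Γ(2) = 1`, `Γ'(2) = 1 - γ` and `ζ(2) = π²/6`, so the
derivative of the factor in front of `ζ(s)` contributes the constant term and the factor itself,
`-1/(2π²)`, multiplies `ζ'(2)`.
-/

namespace Complex

lemma Gamma_two : Gamma 2 = 1 := by simp

lemma hasDerivAt_Gamma_two : HasDerivAt Gamma (1 - Real.eulerMascheroniConstant) 2 := by
  simpa [harmonic_succ, sub_eq_neg_add, one_add_one_eq_two] using hasDerivAt_Gamma_nat 1

lemma hasDerivAt_two_mul_two_pi_cpow_neg (s : ℂ) :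
    HasDerivAt (fun z : ℂ ↦ 2 * (2 * π : ℂ) ^ (-z))
      (-(2 * (2 * π : ℂ) ^ (-s) * Real.log (2 * π))) s := by
  have h2π : (2 * π : ℂ) ≠ 0 := by exact_mod_cast Real.two_pi_pos.ne'
  refine (((hasDerivAt_neg' s).const_cpow (Or.inl h2π)).const_mul 2).congr_deriv ?_
  rw [ofReal_log Real.two_pi_pos.le]
  push_cast
  ring

lemma hasDerivAt_cos_pi_mul_div_two (s : ℂ) :
    HasDerivAt (fun z : ℂ ↦ cos (π * z / 2)) (-sin (π * s / 2) * (π / 2)) s := by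
  simpa using (((hasDerivAt_id s).const_mul (π : ℂ)).div_const 2).ccos

end Complex

noncomputable def zetaOneSubFactor (s : ℂ) : ℂ :=
  2 * (2 * π) ^ (-s) * Gamma s * cos (π * s / 2)

lemma riemannZeta_one_sub_eq_mul_of_one_lt_re {s : ℂ} (hs : 1 < s.re) :
    riemannZeta (1 - s) = zetaOneSubFactor s * riemannZeta s := by
  refine riemannZeta_one_sub (fun n h ↦ ?_) (fun h ↦ ?_)
  · rw [h, neg_re, natCast_re] at hs
    linarith [(n.cast_nonneg : (0 : ℝ) ≤ n)]
  · simp [h] at hs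

lemma deriv_riemannZeta_one_sub {s F' : ℂ} (hs : 1 < s.re)
    (hF : HasDerivAt zetaOneSubFactor F' s) :
    deriv riemannZeta (1 - s) =
      -(F' * riemannZeta s + zetaOneSubFactor s * deriv riemannZeta s) := by
  have hs1 : s ≠ 1 := fun h ↦ by simp [h] at hs
  have hs0 : 1 - s ≠ 1 := fun h ↦ by norm_num [sub_eq_self.mp h] at hs
  have hlhs : HasDerivAt (fun z ↦ riemannZeta (1 - z)) (deriv riemannZeta (1 - s) * -1) s :=
    (differentiableAt_riemannZeta hs0).hasDerivAt.comp s ((hasDerivAt_id s).const_sub 1)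
  have hrhs := hF.mul (differentiableAt_riemannZeta hs1).hasDerivAt
  have heq : (fun z ↦ riemannZeta (1 - z)) =ᶠ[𝓝 s]
      fun z ↦ zetaOneSubFactor z * riemannZeta z := by
    filter_upwards [(isOpen_lt continuous_const continuous_re).mem_nhds hs] with z hz
    exact riemannZeta_one_sub_eq_mul_of_one_lt_re hz
  linear_combination -hlhs.unique (hrhs.congr_of_eventuallyEq heq)

lemma two_mul_two_pi_cpow_neg_two : 2 * (2 * π : ℂ) ^ (-2 : ℂ) = 1 / (2 * π ^ 2) := by
  rw [cpow_neg, ← cpow_natCast]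
  norm_num
  ring

lemma zetaOneSubFactor_two : zetaOneSubFactor 2 = -1 / (2 * π ^ 2) := by
  rw [zetaOneSubFactor, two_mul_two_pi_cpow_neg_two, mul_div_cancel_right₀ _ two_ne_zero, cos_pi,
    Gamma_two]
  ring

lemma hasDerivAt_zetaOneSubFactor_two :
    HasDerivAt zetaOneSubFactor
      ((Real.log (2 * π) + Real.eulerMascheroniConstant - 1) / (2 * π ^ 2)) 2 := by
  refine (((hasDerivAt_two_mul_two_pi_cpow_neg 2).mul hasDerivAt_Gamma_two).mul
    (hasDerivAt_cos_pi_mul_div_two 2)).congr_deriv ?_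
  rw [Pi.mul_apply, two_mul_two_pi_cpow_neg_two, mul_div_cancel_right₀ _ two_ne_zero, cos_pi,
    sin_pi, Gamma_two]
  ring

/-- `ζ'(−1) = (1/12)(1 − γ − log(2π)) + ζ'(2)/(2π²)`. -/
theorem deriv_riemannZeta_neg_one :
    deriv riemannZeta (-1) =
      (1 / 12 : ℂ) * (1 - (Real.eulerMascheroniConstant : ℂ) -
          ((Real.log (2 * Real.pi) : ℝ) : ℂ)) +
        deriv riemannZeta 2 / (2 * (Real.pi : ℂ) ^ 2) := by
  have h := deriv_riemannZeta_one_sub (by norm_num) hasDerivAt_zetaOneSubFactor_two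
  rw [show (1 : ℂ) - 2 = -1 by norm_num, riemannZeta_two, zetaOneSubFactor_two] at h
  rw [h]
  field_simp
  ring
end
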